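/- arXiv:2008.12400 — 12 statements merged into one kernel-verified Lean document; each statement's English description precedes it below -/
import Mathlib

section
/- Let p be a prime number, A a commutative ring, and t ∈ A. In the ring R = A[X]/(X^p − t·X), the annihilator of the ideal generated by x equals the ideal generated by x^{p−1} − t. (This computes the scheme of primitive elements of an Oort–Tate group scheme of rank p: the annihilator of the augmentation ideal (x) is (x^{p−1} − t).) -/
/-- In `R = A[X]/(X^p - tX)`, the annihilator of the augmentation ideal `(x)`
is the ideal `(x^(p-1) - t)`. -/
theorem stmt1 (p : ℕ) (hp : p.Prime) (A : Type) [CommRing A] (t : A) :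
    let R := Polynomial A ⧸
      Ideal.span {(Polynomial.X : Polynomial A) ^ p - Polynomial.C t * Polynomial.X}
    let x : R := Ideal.Quotient.mk _ Polynomial.X
    (Ideal.span {x}).annihilator =
      Ideal.span {x ^ (p - 1) - Ideal.Quotient.mk _ (Polynomial.C t)} := by
  intro R x
  have hpos : 0 < p := hp.pos
  have key : (Polynomial.X : Polynomial A) ^ p - Polynomial.C t * Polynomial.X
      = (Polynomial.X ^ (p - 1) - Polynomial.C t) * Polynomial.X := by
    rw [sub_mul, ← pow_succ, Nat.sub_add_cancel hpos]
  have hmk : (x ^ (p - 1) - Ideal.Quotient.mk _ (Polynomial.C t) : R)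
      = Ideal.Quotient.mk _ (Polynomial.X ^ (p - 1) - Polynomial.C t) := by
    simp [x, map_sub, map_pow]
  have hx0 : (x ^ (p - 1) - Ideal.Quotient.mk _ (Polynomial.C t)) * x = 0 := by
    rw [hmk]
    show Ideal.Quotient.mk _ _ * Ideal.Quotient.mk _ _ = (0 : R)
    rw [← map_mul, ← key, Ideal.Quotient.eq_zero_iff_mem]
    exact Ideal.subset_span rfl
  apply le_antisymm
  · intro r hr
    have hr' : r * x = 0 := Submodule.mem_annihilator.mp hr x (Ideal.subset_span rfl)
    obtain ⟨f, rfl⟩ := Ideal.Quotient.mk_surjective r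
    rw [Ideal.mem_span_singleton]
    have h0 : (Ideal.Quotient.mk _ (f * Polynomial.X) : R) = 0 := by
      rw [map_mul]; exact hr'
    rw [Ideal.Quotient.eq_zero_iff_mem, Ideal.mem_span_singleton, key] at h0
    obtain ⟨g, hg⟩ := h0
    have hf : f = (Polynomial.X ^ (p - 1) - Polynomial.C t) * g := by
      apply Polynomial.isRegular_X.right
      show f * Polynomial.X = _
      rw [hg]; ring
    rw [hmk, hf, map_mul]
    exact Dvd.intro _ rfl
  · rw [Ideal.span_le, Set.singleton_subset_iff, SetLike.mem_coe]
    refine Submodule.mem_annihilator.mpr fun m hm => ?_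
    obtain ⟨c, rfl⟩ := Ideal.mem_span_singleton.mp hm
    show _ * (x * c) = 0
    rw [← mul_assoc, hx0, zero_mul]
end

section
/- Let p be a prime number, A a commutative ring, and t ∈ A. In the ring B = A[X,Y]/(X^p − t·X, Y^p − t·Y), the annihilator of the ideal generated by x equals the ideal generated by x^{p−1} − t (and symmetrically, the annihilator of the ideal generated by y equals the ideal generated by y^{p−1} − t). -/
open MvPolynomial

set_option synthInstance.maxHeartbeats 1000000
set_option maxHeartbeats 1000000

private lemma aux_reg {A : Type} [CommRing A] (k : Fin 2) (u : MvPolynomial (Fin 2) A)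
    (h : Polynomial.Monic ((optionEquivLeft A (Fin 1)) (rename (finSuccEquiv' k) u))) :
    IsRegular u := by
  set Φ := (renameEquiv A (finSuccEquiv' k)).trans (optionEquivLeft A (Fin 1)) with hΦ
  have h' : Polynomial.Monic (Φ u) := h
  have hreg := h'.isRegular
  have main : ∀ x y : MvPolynomial (Fin 2) A, u * x = u * y → x = y := by
    intro x y hxy
    apply Φ.injective
    apply hreg.left
    show Φ u * Φ x = Φ u * Φ y
    rw [← map_mul, ← map_mul, hxy]
  constructor
  · intro x y hxy; exact main x y hxy
  · intro x y hxy; exact main x y (by simpa [mul_comm] using hxy)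

private lemma reg_X {A : Type} [CommRing A] (k : Fin 2) :
    IsRegular (X k : MvPolynomial (Fin 2) A) := by
  apply aux_reg k
  rw [rename_X, finSuccEquiv'_at, optionEquivLeft_X_none]
  exact Polynomial.monic_X

private lemma reg_rel {A : Type} [CommRing A] (p : ℕ) (hp : p.Prime) (t : A) (k : Fin 2) :
    IsRegular ((X k : MvPolynomial (Fin 2) A) ^ p - C t * X k) := by
  apply aux_reg k
  rw [map_sub, map_sub, map_pow, map_pow, map_mul, map_mul, rename_X, finSuccEquiv'_at,
    optionEquivLeft_X_none, rename_C, optionEquivLeft_C]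
  apply Polynomial.monic_X_pow_sub
  calc (Polynomial.C (C t : MvPolynomial (Fin 1) A) * Polynomial.X).degree
      ≤ (Polynomial.C (C t : MvPolynomial (Fin 1) A)).degree + Polynomial.X.degree :=
        Polynomial.degree_mul_le _ _
    _ ≤ 0 + 1 := add_le_add Polynomial.degree_C_le Polynomial.degree_X_le
    _ = (1 : ℕ) := by norm_num
    _ < (p : ℕ) := by exact_mod_cast hp.one_lt

private lemma X_dvd_sub_ev {A : Type} [CommRing A] (k : Fin 2) (f : MvPolynomial (Fin 2) A) :
    X k ∣ f - aeval (fun m => if m = k then (0 : MvPolynomial (Fin 2) A) else X m) f := by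
  induction f using MvPolynomial.induction_on with
  | C a => simp [algebraMap_eq]
  | add f g hf hg =>
      rw [map_add, add_sub_add_comm]
      exact dvd_add hf hg
  | mul_X f m hf =>
      by_cases hm : m = k
      · subst hm
        simp only [map_mul, aeval_X, if_pos, mul_zero, sub_zero]
        exact Dvd.intro_left f rfl
      · simp only [map_mul, aeval_X, if_neg hm]
        obtain ⟨c, hc⟩ := hf
        exact ⟨c * X m, by rw [← sub_mul, hc]; ring⟩

private lemma ann_helper (p : ℕ) (hp : p.Prime) (A : Type) [CommRing A] (t : A)
    (i j : Fin 2) (hij : j ≠ i) (I : Ideal (MvPolynomial (Fin 2) A))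
    (hI : I = Ideal.span {X i ^ p - C t * X i, X j ^ p - C t * X j}) :
    (Ideal.span {Ideal.Quotient.mk I (X i)}).annihilator =
      Ideal.span {Ideal.Quotient.mk I (X i ^ (p - 1) - C t)} := by
  have hp1 : p - 1 + 1 = p := Nat.succ_pred_eq_of_pos hp.pos
  have ha : (X i : MvPolynomial (Fin 2) A) ^ p - C t * X i
      = X i * (X i ^ (p - 1) - C t) := by
    conv_lhs => rw [← hp1, pow_succ]
    ring
  have hamem : (X i : MvPolynomial (Fin 2) A) ^ p - C t * X i ∈ I := by
    rw [hI]; exact Ideal.subset_span (by left; rfl)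
  have hbmem : (X j : MvPolynomial (Fin 2) A) ^ p - C t * X j ∈ I := by
    rw [hI]; exact Ideal.subset_span (by right; rfl)
  apply le_antisymm
  · intro r hr
    obtain ⟨f, rfl⟩ := Ideal.Quotient.mk_surjective r
    rw [← Ideal.submodule_span_eq, Submodule.mem_annihilator_span_singleton, smul_eq_mul, ← map_mul,
      Ideal.Quotient.eq_zero_iff_mem, hI, Ideal.mem_span_pair] at hr
    obtain ⟨g, h, hgh⟩ := hr
    set ev := aeval (R := A) (fun m => if m = i then (0 : MvPolynomial (Fin 2) A) else X m) with hev
    have hevXi : ev (X i) = 0 := by rw [hev, aeval_X, if_pos rfl]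
    have hevXj : ev (X j) = X j := by rw [hev, aeval_X, if_neg hij]
    have hevC : ev (C t) = C t := by rw [hev, aeval_C, algebraMap_eq]
    have hzero : ev h * (X j ^ p - C t * X j) = 0 := by
      have h2 := congrArg ev hgh
      simp only [map_add, map_mul, map_sub, map_pow, hevXi, hevXj, hevC, mul_zero,
        zero_pow hp.ne_zero, zero_sub, sub_zero, neg_zero, add_zero, zero_add] at h2
      exact h2
    have hevh : ev h = 0 := by
      have hbreg := reg_rel p hp t (A := A) j
      apply hbreg.right
      show ev h * (X j ^ p - C t * X j) = 0 * (X j ^ p - C t * X j)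
      rw [zero_mul]; exact hzero
    obtain ⟨h1, hh1⟩ : (X i : MvPolynomial (Fin 2) A) ∣ h := by
      have hd := X_dvd_sub_ev i h
      rw [← hev] at hd
      rwa [hevh, sub_zero] at hd
    have key : f = g * (X i ^ (p - 1) - C t) + h1 * (X j ^ p - C t * X j) := by
      refine (reg_X i (A := A)).left ?_
      show X i * f = X i * (g * (X i ^ (p - 1) - C t) + h1 * (X j ^ p - C t * X j))
      linear_combination -hgh + g * ha + (X j ^ p - C t * X j) * hh1
    rw [key, map_add, map_mul, map_mul, Ideal.Quotient.eq_zero_iff_mem.mpr hbmem,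
      mul_zero, add_zero]
    exact Ideal.mem_span_singleton'.mpr ⟨_, rfl⟩
  · rw [Ideal.span_le, Set.singleton_subset_iff]
    rw [SetLike.mem_coe, ← Ideal.submodule_span_eq, Submodule.mem_annihilator_span_singleton, smul_eq_mul, ← map_mul]
    rw [show (X i ^ (p - 1) - C t) * X i = X i ^ p - C t * X i by rw [ha]; ring]
    exact Ideal.Quotient.eq_zero_iff_mem.mpr hamem

/-- In `B = A[X,Y]/(X^p - tX, Y^p - tY)`, the annihilator of the ideal `(x)` is
`(x^(p-1) - t)`, and symmetrically the annihilator of `(y)` is `(y^(p-1) - t)`. -/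
theorem stmt2 (p : ℕ) (hp : p.Prime) (A : Type) [CommRing A] (t : A) :
    let B := MvPolynomial (Fin 2) A ⧸
      Ideal.span {(X 0 : MvPolynomial (Fin 2) A) ^ p - C t * X 0,
                  (X 1 : MvPolynomial (Fin 2) A) ^ p - C t * X 1}
    let x : B := Ideal.Quotient.mk _ (X 0)
    let y : B := Ideal.Quotient.mk _ (X 1)
    let tB : B := Ideal.Quotient.mk _ (C t)
    (Ideal.span {x}).annihilator = Ideal.span {x ^ (p - 1) - tB} ∧
    (Ideal.span {y}).annihilator = Ideal.span {y ^ (p - 1) - tB} := by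
  intro B x y tB
  constructor
  · rw [show x ^ (p - 1) - tB = Ideal.Quotient.mk _ (X 0 ^ (p - 1) - C t) by
      simp [x, tB, map_sub, map_pow]]
    exact ann_helper p hp A t 0 1 (by decide) _ rfl
  · rw [show y ^ (p - 1) - tB = Ideal.Quotient.mk _ (X 1 ^ (p - 1) - C t) by
      simp [y, tB, map_sub, map_pow]]
    exact ann_helper p hp A t 1 0 (by decide) _ (by rw [Set.pair_comm])
end

section
/- Let p be a prime number, A a commutative ring, and t ∈ A. In the ring B = A[X,Y]/(X^p − t·X, Y^p − t·Y), the intersection of the ideal generated by x^{p−1} − t and the ideal generated by y^{p−1} − t equals the principal ideal generated by the product (x^{p−1} − t)·(y^{p−1} − t). -/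
/-!
Write `a = x^(p-1) - t` and `b = y^(p-1) - t`; the relations are `x * a = 0` and `y * b = 0`.
If `u a ≡ w b` modulo these relations, then `a (u - s x) = b (w + v y)` in `A[X,Y]`. Since `a` is
monic in `X` and `b` does not involve `X`, `b` divides `u - s x` (reduce modulo `b` and use
that monic polynomials are non-zero-divisors), so `u a ≡ (u - s x) a` is a multiple of `a b`.
-/

open Polynomial in
theorem Polynomial.Monic.C_dvd_of_C_dvd_mul {R : Type*} [CommRing R] {M U : R[X]} (hM : M.Monic)
    {c : R} (h : C c ∣ M * U) : C c ∣ U := by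
  have hker (f : R[X]) : mapRingHom (Ideal.Quotient.mk (Ideal.span {c})) f = 0 ↔ C c ∣ f := by
    rw [← RingHom.mem_ker, ker_mapRingHom, Ideal.mk_ker, Ideal.map_span, Set.image_singleton,
      Ideal.mem_span_singleton]
  rw [← hker] at h ⊢
  rwa [map_mul, coe_mapRingHom, (hM.map _).mul_right_eq_zero_iff] at h

namespace MvPolynomial

variable {R : Type*} [CommRing R] {n : ℕ}

theorem finSuccEquiv_rename_succ (c : MvPolynomial (Fin n) R) :
    finSuccEquiv R n (rename Fin.succ c) = Polynomial.C c := by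
  induction c using MvPolynomial.induction_on with
  | C r => simp [finSuccEquiv_apply]
  | add f g hf hg => simp [hf, hg]
  | mul_X f i hf => simp [hf, finSuccEquiv_X_succ]

theorem rename_succ_dvd_of_dvd_mul {M U : MvPolynomial (Fin (n + 1)) R}
    (hM : (finSuccEquiv R n M).Monic) {c : MvPolynomial (Fin n) R}
    (h : rename Fin.succ c ∣ M * U) : rename Fin.succ c ∣ U := by
  have := hM.C_dvd_of_C_dvd_mul (U := finSuccEquiv R n U) (c := c)
    (by simpa [← finSuccEquiv_rename_succ] using map_dvd (finSuccEquiv R n) h)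
  rw [← finSuccEquiv_rename_succ] at this
  simpa using map_dvd (finSuccEquiv R n).symm this

end MvPolynomial

theorem Ideal.Quotient.span_mk_inf_span_mk_eq_span_mk_mul {R : Type*} [CommRing R]
    {a b x y : R} {I : Ideal R} (hI : I = Ideal.span {a * x, b * y})
    (hab : ∀ u, b ∣ a * u → b ∣ u) :
    Ideal.span {mk I a} ⊓ Ideal.span {mk I b} = Ideal.span {mk I a * mk I b} := by
  refine le_antisymm (fun z hz => ?_) (le_inf ?_ ?_)
  · rw [Ideal.mem_inf, Ideal.mem_span_singleton', Ideal.mem_span_singleton'] at hz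
    obtain ⟨⟨u', hu⟩, ⟨w', hw⟩⟩ := hz
    obtain ⟨⟨u, rfl⟩, ⟨w, rfl⟩⟩ := And.intro (mk_surjective u') (mk_surjective w')
    have hdiff : u * a - w * b ∈ I := Ideal.Quotient.eq.mp (by rw [map_mul, map_mul, hu, hw])
    obtain ⟨s, v, hsv⟩ := Ideal.mem_span_pair.mp (hI ▸ hdiff)
    obtain ⟨q, hq⟩ := hab (u - s * x) ⟨w + v * y, by linear_combination -hsv⟩
    have hax : mk I (a * x) = 0 := eq_zero_iff_mem.mpr (hI ▸ Ideal.subset_span (by simp))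
    have hua : u * a = q * (a * b) + s * (a * x) := by linear_combination a * hq
    refine Ideal.mem_span_singleton'.mpr ⟨mk I q, ?_⟩
    calc mk I q * (mk I a * mk I b) = mk I (u * a) := by
          rw [hua, map_add, map_mul _ s, hax, mul_zero, add_zero, map_mul, map_mul]
      _ = z := by rw [map_mul, hu]
  · exact Ideal.span_singleton_le_span_singleton.mpr (dvd_mul_right _ _)
  · exact Ideal.span_singleton_le_span_singleton.mpr (dvd_mul_left _ _)

open MvPolynomial

/-- In `B = A[X,Y]/(X^p - tX, Y^p - tY)`, the intersection of the ideals
`(x^(p-1) - t)` and `(y^(p-1) - t)` is the principal ideal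
`((x^(p-1) - t) * (y^(p-1) - t))`. -/
theorem stmt3 (p : ℕ) (hp : p.Prime) (A : Type) [CommRing A] (t : A) :
    let B := MvPolynomial (Fin 2) A ⧸
      Ideal.span {(X 0 : MvPolynomial (Fin 2) A) ^ p - C t * X 0,
                  (X 1 : MvPolynomial (Fin 2) A) ^ p - C t * X 1}
    let x : B := Ideal.Quotient.mk _ (X 0)
    let y : B := Ideal.Quotient.mk _ (X 1)
    let tB : B := Ideal.Quotient.mk _ (C t)
    Ideal.span {x ^ (p - 1) - tB} ⊓ Ideal.span {y ^ (p - 1) - tB} =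
      Ideal.span {(x ^ (p - 1) - tB) * (y ^ (p - 1) - tB)} := by
  intro B x y tB
  have hI : Ideal.span {(X 0 : MvPolynomial (Fin 2) A) ^ p - C t * X 0, X 1 ^ p - C t * X 1} =
      Ideal.span {(X 0 ^ (p - 1) - C t) * X 0, (X 1 ^ (p - 1) - C t) * X 1} := by
    simp only [sub_mul, pow_sub_one_mul hp.ne_zero]
  have hM : (finSuccEquiv A 1 (X 0 ^ (p - 1) - C t)).Monic := by
    rw [map_sub, map_pow, finSuccEquiv_X_zero, ← algebraMap_eq, AlgEquiv.commutes]
    exact Polynomial.monic_X_pow_sub_C (C t) (Nat.sub_ne_zero_of_lt hp.one_lt)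
  have hab (u : MvPolynomial (Fin 2) A) :
      X 1 ^ (p - 1) - C t ∣ (X 0 ^ (p - 1) - C t) * u → X 1 ^ (p - 1) - C t ∣ u := by
    have hb : rename Fin.succ (X 0 ^ (p - 1) - C t : MvPolynomial (Fin 1) A) =
        X 1 ^ (p - 1) - C t := by
      rw [map_sub, map_pow, rename_X, rename_C]
      rfl
    rw [← hb]
    exact rename_succ_dvd_of_dvd_mul hM
  have key := Ideal.Quotient.span_mk_inf_span_mk_eq_span_mk_mul hI hab
  rwa [map_sub, map_sub, map_pow, map_pow] at key
end

section
/- Let p be a prime number, A a commutative ring, and t ∈ A. In the ring B = A[X,Y]/(X^p − t·X, Y^p − t·Y), the annihilator of the ideal generated by x and y (the augmentation ideal) equals the principal ideal generated by (x^{p−1} − t)·(y^{p−1} − t). (This computes the scheme of primitive elements of G × G for an Oort–Tate group scheme G.) -/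
open MvPolynomial

/-!
Write `f = X ^ (p - 1) - t`, so the relations read `x f(x) = 0` and `y f(y) = 0`. View `A[X, Y]`
as `R[X]` with `R = A[Y]` and work in `(R / I)[X]` with `I = (Y f(Y))`. There `X` is a
non-zero-divisor, so `q x = 0` forces `q ≡ a f(X)`; since `x f(x) = 0`, the polynomial `a` may be
replaced by its constant term `c ∈ R`. Then `q y = 0` says `X f(X)` divides `c Y f(X)` in
`(R / I)[X]`; cancelling the monic `f` and comparing constant terms gives `c Y ∈ I`, i.e.
`c ∈ (f(Y))` because `Y` is a non-zero-divisor of `R`.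
-/

theorem Ideal.annihilator_span_pair_mk_eq {S : Type*} [CommRing S] {K : Ideal S} {a b h : S}
    (H : ∀ q, q * a ∈ K ∧ q * b ∈ K ↔ q ∈ Ideal.span {h} ⊔ K) :
    (Ideal.span {Ideal.Quotient.mk K a, Ideal.Quotient.mk K b}).annihilator =
      Ideal.span {Ideal.Quotient.mk K h} := by
  ext z
  obtain ⟨q, rfl⟩ := Ideal.Quotient.mk_surjective z
  simp only [← Ideal.mem_quotient_iff_mem_sup, Ideal.map_span, Set.image_singleton] at H
  rw [← H, Ideal.span, Submodule.mem_annihilator_span]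
  simp [← map_mul, Ideal.Quotient.eq_zero_iff_mem]

namespace Polynomial

variable {R : Type*} [CommRing R] {I : Ideal R}

theorem mem_span_singleton_sup_map_C_iff {s q : R[X]} :
    q ∈ Ideal.span {s} ⊔ I.map C ↔ s.map (Ideal.Quotient.mk I) ∣ q.map (Ideal.Quotient.mk I) := by
  have hsurj : Function.Surjective (mapRingHom (Ideal.Quotient.mk I)) :=
    map_surjective _ Ideal.Quotient.mk_surjective
  have hker : I.map C = RingHom.ker (mapRingHom (Ideal.Quotient.mk I)) := by
    rw [ker_mapRingHom, Ideal.mk_ker]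
  rw [hker, RingHom.ker_eq_comap_bot, ← Ideal.comap_map_of_surjective _ hsurj, Ideal.mem_comap,
    Ideal.map_span, Set.image_singleton, Ideal.mem_span_singleton]
  rfl

theorem mem_span_singleton_sup_map_C_of_mul_mem {m f q : R[X]} (hm : m.Monic)
    (h : q * m ∈ Ideal.span {m * f} ⊔ I.map C) : q ∈ Ideal.span {f} ⊔ I.map C := by
  rw [mem_span_singleton_sup_map_C_iff] at h ⊢
  obtain ⟨a, ha⟩ := h
  refine ⟨a, (hm.map (Ideal.Quotient.mk I)).isRegular.right ?_⟩
  simp only [Polynomial.map_mul] at ha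
  dsimp only
  linear_combination ha

theorem mem_of_C_mul_mem_span_X_mul_sup_map_C {f : R[X]} (hf : f.Monic) {c : R}
    (h : C c * f ∈ Ideal.span {X * f} ⊔ I.map C) : c ∈ I := by
  rw [mem_span_singleton_sup_map_C_iff] at h
  obtain ⟨a, ha⟩ := h
  have hc : C (Ideal.Quotient.mk I c) = X * a := by
    refine (hf.map (Ideal.Quotient.mk I)).isRegular.right ?_
    simp only [Polynomial.map_mul, map_C, map_X] at ha
    dsimp only
    linear_combination ha
  rw [← Ideal.Quotient.eq_zero_iff_mem]
  simpa using congrArg (coeff · 0) hc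

theorem exists_mul_mem_and_sub_C_mul_mem {f q : R[X]} (hf : f.Monic) (r : R)
    (hX : q * X ∈ Ideal.span {X * f} ⊔ I.map C)
    (hr : q * C r ∈ Ideal.span {X * f} ⊔ I.map C) :
    ∃ c, c * r ∈ I ∧ q - C c * f ∈ Ideal.span {X * f} ⊔ I.map C := by
  obtain ⟨a, i, hi, rfl⟩ :=
    Ideal.mem_span_singleton_sup.mp (mem_span_singleton_sup_map_C_of_mul_mem monic_X hX)
  obtain ⟨b, hb⟩ := X_dvd_sub_C (p := a)
  have hsub : a * f + i - C (a.coeff 0) * f ∈ Ideal.span {X * f} ⊔ I.map C :=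
    Ideal.mem_span_singleton_sup.mpr ⟨b, i, hi, by linear_combination -f * hb⟩
  refine ⟨a.coeff 0, mem_of_C_mul_mem_span_X_mul_sup_map_C hf ?_, hsub⟩
  have := Ideal.sub_mem _ hr (Ideal.mul_mem_right (C r) _ hsub)
  convert this using 1
  rw [C_mul]
  ring

theorem mul_X_mem_and_mul_C_mem_iff {f : R[X]} (hf : f.Monic) {y : R} (hy : IsRegular y) (g : R)
    (q : R[X]) :
    q * X ∈ Ideal.span {X * f, C (y * g)} ∧ q * C y ∈ Ideal.span {X * f, C (y * g)} ↔
      q ∈ Ideal.span {f * C g} ⊔ Ideal.span {X * f, C (y * g)} := by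
  have hJ : Ideal.span {X * f, C (y * g)} = Ideal.span {X * f} ⊔ (Ideal.span {y * g}).map C := by
    rw [Ideal.span_insert, Ideal.map_span, Set.image_singleton]
  constructor
  · rintro ⟨hX, hy'⟩
    rw [hJ] at hX hy'
    obtain ⟨c, hcy, hc⟩ := exists_mul_mem_and_sub_C_mul_mem hf y hX hy'
    obtain ⟨d, hd⟩ := Ideal.mem_span_singleton'.mp hcy
    have hcd : c = g * d := hy.right (by linear_combination -hd)
    refine Ideal.mem_span_singleton_sup.mpr ⟨C d, _, hJ ▸ hc, ?_⟩
    rw [hcd, C_mul]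
    ring
  · intro h
    obtain ⟨a, j, hj, rfl⟩ := Ideal.mem_span_singleton_sup.mp h
    rw [add_mul, add_mul]
    refine ⟨Ideal.add_mem _ (Ideal.mem_span_pair.mpr ?_) (Ideal.mul_mem_right _ _ hj),
      Ideal.add_mem _ (Ideal.mem_span_pair.mpr ?_) (Ideal.mul_mem_right _ _ hj)⟩
    · exact ⟨a * C g, 0, by ring⟩
    · exact ⟨0, a * f, by rw [C_mul]; ring⟩

end Polynomial

namespace MvPolynomial

variable {A : Type*} [CommRing A]

theorem mul_X_zero_mem_and_mul_X_one_mem_iff {k : ℕ} (hk : k ≠ 0) (t : A)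
    (q : MvPolynomial (Fin 2) A) :
    let K := Ideal.span {(X 0 : MvPolynomial (Fin 2) A) ^ (k + 1) - C t * X 0,
      (X 1 : MvPolynomial (Fin 2) A) ^ (k + 1) - C t * X 1}
    q * X 0 ∈ K ∧ q * X 1 ∈ K ↔ q ∈ Ideal.span {(X 0 ^ k - C t) * (X 1 ^ k - C t)} ⊔ K := by
  intro K
  let e : MvPolynomial (Fin 2) A ≃+* Polynomial (MvPolynomial (Fin 1) A) :=
    (finSuccEquiv A 1).toRingEquiv
  have he0 : e (X 0) = Polynomial.X := finSuccEquiv_X_zero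
  have he1 : e (X 1) = Polynomial.C (X 0) := finSuccEquiv_X_succ (j := 0)
  have heC : e (C t) = Polynomial.C (C t) := (finSuccEquiv A 1).commutes t
  have h0 : (X 0 : MvPolynomial (Fin 2) A) ^ (k + 1) - C t * X 0 = X 0 * (X 0 ^ k - C t) := by
    ring
  have h1 : (X 1 : MvPolynomial (Fin 2) A) ^ (k + 1) - C t * X 1 = X 1 * (X 1 ^ k - C t) := by
    ring
  simp only [← Ideal.apply_mem_of_equiv_iff (f := e), Ideal.map_sup, Ideal.map_span,
    Set.image_insert_eq, Set.image_singleton, K, h0, h1, map_mul, map_sub, map_pow, he0, he1, heC]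
  rw [← Polynomial.C_pow, ← Polynomial.C_sub, ← Polynomial.C_mul]
  exact Polynomial.mul_X_mem_and_mul_C_mem_iff (Polynomial.monic_X_pow_sub_C _ hk) isRegular_X _ _

end MvPolynomial

/-- In `B = A[X,Y]/(X^p - tX, Y^p - tY)`, the annihilator of the augmentation
ideal `(x, y)` is the principal ideal `((x^(p-1) - t) * (y^(p-1) - t))`. -/
theorem stmt4 (p : ℕ) (hp : p.Prime) (A : Type) [CommRing A] (t : A) :
    let B := MvPolynomial (Fin 2) A ⧸
      Ideal.span {(X 0 : MvPolynomial (Fin 2) A) ^ p - C t * X 0,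
                  (X 1 : MvPolynomial (Fin 2) A) ^ p - C t * X 1}
    let x : B := Ideal.Quotient.mk _ (X 0)
    let y : B := Ideal.Quotient.mk _ (X 1)
    let tB : B := Ideal.Quotient.mk _ (C t)
    (Ideal.span {x, y}).annihilator =
      Ideal.span {(x ^ (p - 1) - tB) * (y ^ (p - 1) - tB)} := by
  obtain ⟨k, rfl⟩ : ∃ k, p = k + 1 := Nat.exists_eq_add_one.mpr hp.pos
  have hk : k ≠ 0 := by have := hp.two_le; omega
  intro B x y tB
  rw [Nat.add_sub_cancel,
    Ideal.annihilator_span_pair_mk_eq (MvPolynomial.mul_X_zero_mem_and_mul_X_one_mem_iff hk t)]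
  simp only [map_mul, map_sub, map_pow]
  rfl
end

section
/- Let p be an odd prime and let g(X,Y) = Σ_{i=1}^{p−1} (i!·(p−i)!)^{−1} · X^i · Y^{p−i} in 𝔽_p[X,Y]. Then g(X,−X) = 0, and consequently there exists a polynomial g′ ∈ 𝔽_p[X,Y], homogeneous of degree p−1 (in particular with zero constant term), such that g(X,Y) = (X+Y)·g′(X,Y). -/
open MvPolynomial

private lemma sum_Icc_one' {M : Type*} [AddCommMonoid M] (n : ℕ) (f : ℕ → M) :
    ∑ i ∈ Finset.Icc 1 n, f i = ∑ j ∈ Finset.range n, f (j + 1) := by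
  rw [← Finset.Ico_add_one_right_eq_Icc, Finset.sum_Ico_eq_sum_range]
  exact Finset.sum_congr rfl fun j _ => by rw [add_comm]

/-- For an odd prime `p`, the polynomial
`g(X,Y) = ∑_{i=1}^{p-1} (i! (p-i)!)⁻¹ X^i Y^(p-i)` over `𝔽_p` vanishes upon
substituting `Y = -X`, and consequently `g = (X + Y) g'` for some polynomial
`g'` that is homogeneous of degree `p - 1` (in particular has zero constant term). -/
theorem stmt6 (p : ℕ) (hp : p.Prime) (hodd : Odd p) :
    let g : MvPolynomial (Fin 2) (ZMod p) :=
      ∑ i ∈ Finset.Icc 1 (p - 1),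
        C (((i.factorial * (p - i).factorial : ℕ) : ZMod p))⁻¹ * X 0 ^ i * X 1 ^ (p - i)
    (aeval ![(X 0 : MvPolynomial (Fin 2) (ZMod p)), -(X 0)]) g = 0 ∧
    ∃ g' : MvPolynomial (Fin 2) (ZMod p),
      g'.IsHomogeneous (p - 1) ∧ coeff 0 g' = 0 ∧ g = (X 0 + X 1) * g' := by
  intro g
  haveI : Fact p.Prime := ⟨hp⟩
  have hp2 : p ≠ 2 := by rintro rfl; exact (by decide : ¬ Odd 2) hodd
  have hp3 : 3 ≤ p := by
    have := hp.two_le; omega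
  set c : ℕ → ZMod p := fun i => (((i.factorial * (p - i).factorial : ℕ) : ZMod p))⁻¹ with hc
  have hg : g = ∑ i ∈ Finset.Icc 1 (p - 1), C (c i) * X 0 ^ i * X 1 ^ (p - i) := rfl
  -- symmetry of c
  have hcsym : ∀ i, 1 ≤ i → i ≤ p - 1 → c (p - i) = c i := by
    intro i h1 h2
    have : p - (p - i) = i := Nat.sub_sub_self (by omega)
    simp only [hc, this, Nat.mul_comm]
  -- the coefficients of g'
  set a : ℕ → ZMod p := fun j => ∑ k ∈ Finset.range j, (-1 : ZMod p) ^ k * c (j - k) with ha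
  have ha0 : a 0 = 0 := by simp [ha]
  have harec : ∀ j, a (j + 1) = -(a j) + c (j + 1) := by
    intro j
    rw [ha]
    simp only
    rw [Finset.sum_range_succ']
    have h1 : ∀ k ∈ Finset.range j,
        (-1 : ZMod p) ^ (k + 1) * c (j + 1 - (k + 1)) = -((-1 : ZMod p) ^ k * c (j - k)) := by
      intro k hk
      have : j + 1 - (k + 1) = j - k := by omega
      rw [this, pow_succ]
      ring
    rw [Finset.sum_congr rfl h1, Finset.sum_neg_distrib]
    simp
  -- the key sum T = 0
  have hsq : ∀ k : ℕ, (-1 : ZMod p) ^ k * (-1 : ZMod p) ^ k = 1 := by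
    intro k; rw [← mul_pow, neg_mul_neg, one_mul, one_pow]
  have hT : ∑ j ∈ Finset.range (p - 1), (-1 : ZMod p) ^ j * c (j + 1) = 0 := by
    set T := ∑ j ∈ Finset.range (p - 1), (-1 : ZMod p) ^ j * c (j + 1) with hTdef
    have hpair : ∀ j ∈ Finset.range (p - 1),
        (-1 : ZMod p) ^ j * c (j + 1) = -((-1 : ZMod p) ^ (p - 2 - j) * c (p - 2 - j + 1)) := by
      intro j hj
      rw [Finset.mem_range] at hj
      have h1 : p - 2 - j + 1 = p - (j + 1) := by omega
      have h2 : c (p - (j + 1)) = c (j + 1) := hcsym (j + 1) (by omega) (by omega)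
      have h3 : (-1 : ZMod p) ^ (p - 2 - j) * (-1 : ZMod p) ^ j = -1 := by
        rw [← pow_add]
        have : p - 2 - j + j = p - 2 := by omega
        rw [this]
        have h4 : (-1 : ZMod p) ^ (p - 2) * (-1 : ZMod p) ^ 2 = (-1 : ZMod p) ^ p := by
          rw [← pow_add]; congr 1; omega
        have h5 : (-1 : ZMod p) ^ p = -1 := hodd.neg_one_pow
        have h6 : ((-1 : ZMod p)) ^ 2 = 1 := by ring
        rw [h6, mul_one] at h4
        rw [h4, h5]
      have h7 : (-1 : ZMod p) ^ (p - 2 - j) = -(-1 : ZMod p) ^ j := by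
        calc (-1 : ZMod p) ^ (p - 2 - j)
            = (-1 : ZMod p) ^ (p - 2 - j) * ((-1 : ZMod p) ^ j * (-1 : ZMod p) ^ j) := by
              rw [hsq, mul_one]
          _ = ((-1 : ZMod p) ^ (p - 2 - j) * (-1 : ZMod p) ^ j) * (-1 : ZMod p) ^ j := by ring
          _ = -(-1 : ZMod p) ^ j := by rw [h3]; ring
      rw [h1, h2, h7]; ring
    have hTT : T = -T := by
      calc T = ∑ j ∈ Finset.range (p - 1),
            -((-1 : ZMod p) ^ (p - 2 - j) * c (p - 2 - j + 1)) :=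
          Finset.sum_congr rfl hpair
        _ = -∑ j ∈ Finset.range (p - 1), (-1 : ZMod p) ^ (p - 2 - j) * c (p - 2 - j + 1) := by
          rw [Finset.sum_neg_distrib]
        _ = -T := by
          congr 1
          refine Finset.sum_nbij' (fun j => p - 2 - j) (fun j => p - 2 - j) ?_ ?_ ?_ ?_ ?_
          · intro j hj; rw [Finset.mem_range] at *; omega
          · intro j hj; rw [Finset.mem_range] at *; omega
          · intro j hj; rw [Finset.mem_range] at hj; omega
          · intro j hj; rw [Finset.mem_range] at hj; omega
          · intro j hj; rfl
    have h2ne : (2 : ZMod p) ≠ 0 := by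
      have : ((2 : ℕ) : ZMod p) ≠ 0 := by
        rw [Ne, ZMod.natCast_eq_zero_iff]
        intro h; have := Nat.le_of_dvd (by norm_num) h; omega
      simpa using this
    have : (2 : ZMod p) * T = 0 := by
      have : T + T = 0 := by nth_rewrite 1 [hTT]; ring
      linear_combination this
    rcases mul_eq_zero.mp this with h | h
    · exact absurd h h2ne
    · exact h
  -- a (p-1) = 0
  have hatop : a (p - 1) = 0 := by
    rw [ha]
    simp only
    have h1 : ∀ k ∈ Finset.range (p - 1),
        (-1 : ZMod p) ^ k * c (p - 1 - k) = (-1 : ZMod p) ^ k * c (k + 1) := by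
      intro k hk
      rw [Finset.mem_range] at hk
      have h2 : p - 1 - k = p - (k + 1) := by omega
      rw [h2, hcsym (k + 1) (by omega) (by omega)]
    rw [Finset.sum_congr rfl h1, hT]
  constructor
  · -- first part
    rw [hg, map_sum]
    have h1 : ∀ i ∈ Finset.Icc 1 (p - 1),
        (aeval ![(X 0 : MvPolynomial (Fin 2) (ZMod p)), -(X 0)])
          (C (c i) * X 0 ^ i * X 1 ^ (p - i))
          = C ((-1) ^ (p - i) * c i) * X 0 ^ p := by
      intro i hi
      rw [Finset.mem_Icc] at hi
      have hip : i + (p - i) = p := by omega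
      rw [map_mul, map_mul, map_pow, map_pow, aeval_X, aeval_X, aeval_C]
      simp only [Matrix.cons_val_zero, Matrix.cons_val_one, Matrix.head_cons]
      rw [neg_pow, map_mul, map_pow, map_neg, map_one]
      rw [algebraMap_eq]
      have hXp : (X 0 : MvPolynomial (Fin 2) (ZMod p)) ^ p = X 0 ^ i * X 0 ^ (p - i) := by
        rw [← pow_add, hip]
      rw [hXp]
      ring
    rw [Finset.sum_congr rfl h1, ← Finset.sum_mul, ← map_sum]
    have hS : ∑ i ∈ Finset.Icc 1 (p - 1), (-1 : ZMod p) ^ (p - i) * c i = 0 := by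
      rw [sum_Icc_one']
      have h2 : ∀ j ∈ Finset.range (p - 1),
          (-1 : ZMod p) ^ (p - (j + 1)) * c (j + 1) = (-1 : ZMod p) ^ j * c (j + 1) := by
        intro j hj
        rw [Finset.mem_range] at hj
        have h3 : (-1 : ZMod p) ^ (p - (j + 1)) * (-1 : ZMod p) ^ (j + 1) = -1 := by
          rw [← pow_add]
          have : p - (j + 1) + (j + 1) = p := by omega
          rw [this, hodd.neg_one_pow]
        have h4 : (-1 : ZMod p) ^ (p - (j + 1)) = -(-1 : ZMod p) ^ (j + 1) := by
          calc (-1 : ZMod p) ^ (p - (j + 1))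
              = (-1 : ZMod p) ^ (p - (j + 1)) *
                ((-1 : ZMod p) ^ (j + 1) * (-1 : ZMod p) ^ (j + 1)) := by rw [hsq, mul_one]
            _ = ((-1 : ZMod p) ^ (p - (j + 1)) * (-1 : ZMod p) ^ (j + 1)) *
                (-1 : ZMod p) ^ (j + 1) := by ring
            _ = -(-1 : ZMod p) ^ (j + 1) := by rw [h3]; ring
        rw [h4, pow_succ]
        ring
      rw [Finset.sum_congr rfl h2, hT]
    rw [hS, map_zero, zero_mul]
  · -- second part
    have hhom : (∑ j ∈ Finset.range p, C (a j) * X 0 ^ j * X 1 ^ (p - 1 - j) :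
        MvPolynomial (Fin 2) (ZMod p)).IsHomogeneous (p - 1) := by
      apply IsHomogeneous.sum
      intro j hj
      rw [Finset.mem_range] at hj
      have h := ((isHomogeneous_C (Fin 2) (a j)).mul
        ((isHomogeneous_X (ZMod p) (0 : Fin 2)).pow j)).mul
        ((isHomogeneous_X (ZMod p) (1 : Fin 2)).pow (p - 1 - j))
      have hdeg : 0 + 1 * j + 1 * (p - 1 - j) = p - 1 := by omega
      rw [hdeg] at h
      exact h
    refine ⟨∑ j ∈ Finset.range p, C (a j) * X 0 ^ j * X 1 ^ (p - 1 - j), ?_, ?_, ?_⟩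
    · exact hhom
    · apply hhom.coeff_eq_zero
      simp [Finsupp.degree]
      omega
    · -- product identity
      rw [Finset.mul_sum]
      have hterm : ∀ j ∈ Finset.range p,
          ((X 0 : MvPolynomial (Fin 2) (ZMod p)) + X 1) * (C (a j) * X 0 ^ j * X 1 ^ (p - 1 - j))
            = C (a j) * X 0 ^ (j + 1) * X 1 ^ (p - 1 - j)
              + C (a j) * X 0 ^ j * X 1 ^ (p - j) := by
        intro j hj
        rw [Finset.mem_range] at hj
        have h1 : p - j = (p - 1 - j) + 1 := by omega
        rw [h1, pow_succ, pow_succ]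
        ring
      rw [Finset.sum_congr rfl hterm, Finset.sum_add_distrib]
      have hr : Finset.range p = Finset.range ((p - 1) + 1) := by congr 1; omega
      have hA : ∑ j ∈ Finset.range p,
          (C (a j) * X 0 ^ (j + 1) * X 1 ^ (p - 1 - j) : MvPolynomial (Fin 2) (ZMod p))
          = ∑ j ∈ Finset.range (p - 1), C (a j) * X 0 ^ (j + 1) * X 1 ^ (p - (j + 1)) := by
        rw [hr, Finset.sum_range_succ]
        rw [hatop, map_zero, zero_mul, zero_mul, add_zero]
        refine Finset.sum_congr rfl fun j hj => ?_
        rw [Finset.mem_range] at hj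
        congr 2
        omega
      have hB : ∑ j ∈ Finset.range p,
          (C (a j) * X 0 ^ j * X 1 ^ (p - j) : MvPolynomial (Fin 2) (ZMod p))
          = ∑ j ∈ Finset.range (p - 1), C (a (j + 1)) * X 0 ^ (j + 1) * X 1 ^ (p - (j + 1)) := by
        rw [hr, Finset.sum_range_succ']
        rw [ha0, map_zero, zero_mul, zero_mul, add_zero]
      rw [hA, hB, ← Finset.sum_add_distrib, hg, sum_Icc_one']
      refine Finset.sum_congr rfl fun j hj => ?_
      rw [Finset.mem_range] at hj
      have : c (j + 1) = a j + a (j + 1) := by rw [harec]; ring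
      rw [this, map_add]
      ring
end

section
/- Let p be a prime number and R a commutative ring of characteristic p. Let s, t, a, b ∈ R satisfy s·t = 0, a^p = t·a, and b^p = t·b. Let h ∈ 𝔽_p[X,Y] be any polynomial with zero constant term, evaluated at (a,b) in R via the unique 𝔽_p-algebra structure on R. Then (1 + s·h(a,b))^p = 1; in particular, 1 + s·h(a,b) is a unit of R. -/
/-- Let `p` be a prime, `R` a commutative ring of characteristic `p`, and
`s, t, a, b ∈ R` with `s * t = 0`, `a^p = t * a`, `b^p = t * b`. For any polynomial
`h ∈ 𝔽_p[X,Y]` with zero constant term, the element `1 + s * h(a,b)` satisfies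
`(1 + s * h(a,b))^p = 1`; in particular it is a unit. -/
theorem stmt7 (p : ℕ) [Fact p.Prime] (R : Type) [CommRing R] [CharP R p]
    (s t a b : R) (hst : s * t = 0) (ha : a ^ p = t * a) (hb : b ^ p = t * b)
    (h : MvPolynomial (Fin 2) (ZMod p)) (h0 : MvPolynomial.coeff 0 h = 0) :
    (1 + s * MvPolynomial.eval₂ (ZMod.castHom (dvd_refl p) R) ![a, b] h) ^ p = 1 ∧
    IsUnit (1 + s * MvPolynomial.eval₂ (ZMod.castHom (dvd_refl p) R) ![a, b] h) := by
  set f := ZMod.castHom (dvd_refl p) R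
  set e := MvPolynomial.eval₂ f ![a, b] h with he
  -- e ^ p = eval at (a^p, b^p) = eval at (t*a, t*b), and t divides that.
  have hfrob : e ^ p = MvPolynomial.eval₂ f ![t * a, t * b] h := by
    have := MvPolynomial.eval₂_comp_left (frobenius R p) f ![a, b] h
    have hf : (frobenius R p).comp f = f := by
      ext x
      simp [frobenius_def, ← map_pow, ZMod.pow_card]
    rw [hf] at this
    have hv : (frobenius R p) ∘ ![a, b] = ![t * a, t * b] := by
      funext i
      fin_cases i <;> simp [frobenius_def, ha, hb]
    rw [frobenius_def] at this
    rw [this, hv]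
  -- t divides eval at (t*a, t*b)
  have hdvd : t ∣ MvPolynomial.eval₂ f ![t * a, t * b] h := by
    let I := Ideal.span {t}
    have hmem : MvPolynomial.eval₂ f ![t * a, t * b] h ∈ I := by
      have hq := MvPolynomial.eval₂_comp_left (Ideal.Quotient.mk I) f ![t * a, t * b] h
      have hv : (Ideal.Quotient.mk I) ∘ ![t * a, t * b] = (0 : Fin 2 → R ⧸ I) := by
        funext i
        have ht : (Ideal.Quotient.mk I) t = 0 :=
          Ideal.Quotient.eq_zero_iff_mem.mpr (Ideal.subset_span rfl)
        fin_cases i <;> simp [ht]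
      rw [hv, MvPolynomial.eval₂_zero_apply] at hq
      have : MvPolynomial.constantCoeff h = 0 := h0
      rw [this, map_zero] at hq
      exact Ideal.Quotient.eq_zero_iff_mem.mp hq
    exact Ideal.mem_span_singleton.mp hmem
  obtain ⟨c, hc⟩ := hdvd
  have hp1 : 1 ≤ p := (Fact.out : p.Prime).one_lt.le
  have key : (1 + s * e) ^ p = 1 := by
    have hs : s ^ p * t = 0 := by
      have h2 : s ^ p * t = s ^ (p - 1) * (s * t) := by
        conv_lhs => rw [← Nat.sub_add_cancel hp1, pow_succ]
        ring
      rw [h2, hst, mul_zero]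
    have hz : (s * e) ^ p = 0 := by
      rw [mul_pow, hfrob, hc, ← mul_assoc, hs, zero_mul]
    rw [add_pow_char, one_pow, hz, add_zero]
  exact ⟨key, IsUnit.of_pow_eq_one key (Nat.Prime.ne_zero Fact.out)⟩
end

section
/- Let p be a prime number and R a commutative ring of characteristic p. Let s, t, a ∈ R satisfy s·t = 0 and a^p = t·a. Define x ∔ y := x + y + s·g(x,y) for x, y ∈ R, where g(X,Y) = Σ_{i=1}^{p−1} (i!·(p−i)!)^{−1}·X^i·Y^{p−i} ∈ 𝔽_p[X,Y] is evaluated via the 𝔽_p-algebra structure of R. Then for all scalars k, l ∈ 𝔽_p (acting on R through the algebra map 𝔽_p → R), one has (k·a) ∔ (l·a) = (k+l)·a. -/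
open MvPolynomial

/-- Mod-`p` Oort–Tate group law: with `s * t = 0` and `a^p = t * a`, for all
scalars `k, l ∈ 𝔽_p` one has `(k·a) ∔ (l·a) = (k+l)·a`, where
`x ∔ y = x + y + s * g(x,y)` and `g(X,Y) = ∑_{i=1}^{p-1} (i!(p-i)!)⁻¹ X^i Y^(p-i)`. -/
theorem stmt8 (p : ℕ) [Fact p.Prime] (R : Type) [CommRing R] [CharP R p]
    (s t a : R) (hst : s * t = 0) (ha : a ^ p = t * a) :
    ∀ k l : ZMod p,
      let φ : ZMod p →+* R := ZMod.castHom (dvd_refl p) R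
      let g : MvPolynomial (Fin 2) (ZMod p) :=
        ∑ i ∈ Finset.Icc 1 (p - 1),
          C (((i.factorial * (p - i).factorial : ℕ) : ZMod p))⁻¹ * X 0 ^ i * X 1 ^ (p - i)
      φ k * a + φ l * a + s * eval₂ φ ![φ k * a, φ l * a] g = φ (k + l) * a := by
  intro k l φ g
  have hev : eval₂ φ ![φ k * a, φ l * a] g =
      ∑ i ∈ Finset.Icc 1 (p - 1),
        φ (((i.factorial * (p - i).factorial : ℕ) : ZMod p))⁻¹ *
          (φ k * a) ^ i * (φ l * a) ^ (p - i) := by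
    show (eval₂Hom φ ![φ k * a, φ l * a]) g = _
    rw [map_sum]
    refine Finset.sum_congr rfl fun i hi => ?_
    simp [Matrix.cons_val_zero, Matrix.cons_val_one]
  rw [hev, Finset.mul_sum]
  have hz : ∀ i ∈ Finset.Icc 1 (p - 1),
      s * (φ (((i.factorial * (p - i).factorial : ℕ) : ZMod p))⁻¹ *
        (φ k * a) ^ i * (φ l * a) ^ (p - i)) = 0 := by
    intro i hi
    obtain ⟨hi1, hi2⟩ := Finset.mem_Icc.mp hi
    have hip : i + (p - i) = p := by
      have hp : 0 < p := (Fact.out : p.Prime).pos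
      omega
    have key : a ^ i * a ^ (p - i) = t * a := by rw [← pow_add, hip, ha]
    have h2 : s * (φ (((i.factorial * (p - i).factorial : ℕ) : ZMod p))⁻¹ *
        (φ k * a) ^ i * (φ l * a) ^ (p - i)) =
        φ (((i.factorial * (p - i).factorial : ℕ) : ZMod p))⁻¹ * φ k ^ i *
          φ l ^ (p - i) * (a ^ i * a ^ (p - i)) * s := by
      rw [mul_pow, mul_pow]; ring
    rw [h2, key]
    linear_combination (φ (((i.factorial * (p - i).factorial : ℕ) : ZMod p))⁻¹ *
      φ k ^ i * φ l ^ (p - i) * a) * hst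
  rw [Finset.sum_eq_zero hz, add_zero, map_add, add_mul]
end

section
/- Let p be a prime number and R a commutative ring of characteristic p. Let s, t, a, b ∈ R satisfy s·t = 0, a^p = t·a, and b^p = t·b. Define x ∔ y := x + y + s·g(x,y), where g(X,Y) = Σ_{i=1}^{p−1} (i!·(p−i)!)^{−1}·X^i·Y^{p−i} ∈ 𝔽_p[X,Y] is evaluated via the 𝔽_p-algebra structure of R. Then for all m, n ∈ 𝔽_p there exists a unit u ∈ R^× such that ((m·a) ∔ (n·b))^{p−1} − t = u · ((m·a + n·b)^{p−1} − t). -/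
open MvPolynomial

private lemma factF (p : ℕ) [Fact p.Prime] : ∀ i : ℕ, i ≤ p - 1 →
    ((i.factorial : ZMod p)) * (((p - 1 - i).factorial : ZMod p)) = (-1) ^ (i + 1) := by
  have hp : p.Prime := Fact.out
  intro i
  induction i with
  | zero =>
    intro _
    simp only [Nat.factorial_zero, Nat.cast_one, one_mul, Nat.sub_zero, zero_add, pow_one]
    exact ZMod.wilsons_lemma p
  | succ i ih =>
    intro hle
    have hx := ih (by omega)
    have hnat : (i+1).factorial * (p - 1 - (i+1)).factorial * (p - 1 - i)
        = (i+1) * (i.factorial * (p - 1 - i).factorial) := by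
      have e : p - 1 - i = (p - 1 - (i+1)) + 1 := by omega
      rw [e, Nat.factorial_succ, Nat.factorial_succ]
      ring
    have hcast := congrArg (Nat.cast : ℕ → ZMod p) hnat
    push_cast at hcast
    have hsub : ((p - 1 - i : ℕ) : ZMod p) = -(((i : ZMod p)) + 1) := by
      have h := congrArg (Nat.cast : ℕ → ZMod p) (show (p - 1 - i) + (i + 1) = p by omega)
      push_cast at h
      rw [ZMod.natCast_self] at h
      linear_combination h
    have hc : ((i : ZMod p) + 1) ≠ 0 := by
      have : (((i+1 : ℕ)) : ZMod p) ≠ 0 := by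
        rw [Ne, ZMod.natCast_eq_zero_iff]
        intro hdvd
        have := Nat.le_of_dvd (by omega) hdvd
        omega
      simpa using this
    apply mul_left_cancel₀ hc
    linear_combination (-1 : ZMod p) * hcast - ((i : ZMod p) + 1) * hx
      + ((((i+1).factorial : ZMod p)) * (((p - 1 - (i+1)).factorial : ZMod p))) * hsub

private lemma negOnePow (p : ℕ) [Fact p.Prime] : ((-1 : ZMod p)) ^ (p - 1) = 1 := by
  rcases (Fact.out : p.Prime).eq_two_or_odd' with h | h
  · subst h; rw [CharTwo.neg_eq, one_pow]
  · exact (Nat.Odd.sub_odd h odd_one).neg_one_pow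

lemma choose_coef (p : ℕ) [Fact p.Prime] (i : ℕ) (h1 : 1 ≤ i) (h2 : i ≤ p - 1) :
    (((p-2).choose (p-1-i) : ZMod p)) * (((i.factorial * (p - i).factorial : ℕ) : ZMod p))⁻¹
      = -1 := by
  have hp : p.Prime := Fact.out
  have hp2 : 2 ≤ p := hp.two_le
  have hu : (((i.factorial * (p - i).factorial : ℕ) : ZMod p)) ≠ 0 := by
    rw [Ne, ZMod.natCast_eq_zero_iff]
    intro hdvd
    rcases (Nat.Prime.dvd_mul hp).mp hdvd with h | h
    · exact absurd ((Nat.Prime.dvd_factorial hp).mp h) (by omega)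
    · exact absurd ((Nat.Prime.dvd_factorial hp).mp h) (by omega)
  have key : (((p-2).choose (p-1-i) : ZMod p)) = -(((i.factorial * (p - i).factorial : ℕ) : ZMod p)) := by
    have hv : ((((p-1-i).factorial * (i-1).factorial : ℕ)) : ZMod p) ≠ 0 := by
      rw [Ne, ZMod.natCast_eq_zero_iff]
      intro hdvd
      rcases (Nat.Prime.dvd_mul hp).mp hdvd with h | h
      · exact absurd ((Nat.Prime.dvd_factorial hp).mp h) (by omega)
      · exact absurd ((Nat.Prime.dvd_factorial hp).mp h) (by omega)
    apply mul_left_cancel₀ hv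
    have hnat : (p-1-i).factorial * (i-1).factorial * ((p-2).choose (p-1-i)) = (p-2).factorial := by
      have h := Nat.choose_mul_factorial_mul_factorial (show p-1-i ≤ p-2 by omega)
      have e : p - 2 - (p-1-i) = i - 1 := by omega
      rw [e] at h
      linarith [h]
    have hL := congrArg (Nat.cast : ℕ → ZMod p) hnat
    push_cast at hL
    -- (p-2)! = (-1)^(p-1)
    have hF1 := factF p (p-2) (by omega)
    rw [show p - 1 - (p-2) = 1 by omega] at hF1
    simp only [Nat.factorial_one, Nat.cast_one, mul_one] at hF1
    rw [show p - 2 + 1 = p - 1 by omega] at hF1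
    -- F(i) and F(i-1)
    have hFi := factF p i (by omega)
    have hFi1 := factF p (i-1) (by omega)
    rw [show p - 1 - (i-1) = p - i by omega, show i - 1 + 1 = i by omega] at hFi1
    -- LHS = (p-2)! = (-1)^(p-1) = 1
    have hne : ((( (p-1-i).factorial * (i-1).factorial : ℕ)) : ZMod p) * (((p-2).choose (p-1-i) : ZMod p)) = 1 := by
      push_cast
      rw [show ((p-1-i).factorial : ZMod p) * ((i-1).factorial : ZMod p) * ((p-2).choose (p-1-i) : ZMod p) = (((p-1-i).factorial : ZMod p) * ((i-1).factorial : ZMod p) * ((p-2).choose (p-1-i) : ZMod p)) from rfl]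
      calc ((p-1-i).factorial : ZMod p) * ((i-1).factorial : ZMod p) * ((p-2).choose (p-1-i) : ZMod p)
          = ((p-2).factorial : ZMod p) := by linear_combination hL
        _ = (-1) ^ (p-1) := hF1
        _ = 1 := negOnePow p
    -- RHS: v * (-(u)) = 1
    have hrhs : ((((p-1-i).factorial * (i-1).factorial : ℕ)) : ZMod p) * (-(((i.factorial * (p - i).factorial : ℕ) : ZMod p))) = 1 := by
      push_cast
      have e1 : ((i.factorial : ZMod p)) * (((p-1-i).factorial : ZMod p)) = (-1)^(i+1) := hFi
      have e2 := hFi1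
      calc ((p-1-i).factorial : ZMod p) * ((i-1).factorial : ZMod p) * (-(((i.factorial : ZMod p)) * (((p-i).factorial : ZMod p))))
          = -((((i.factorial : ZMod p)) * (((p-1-i).factorial : ZMod p))) * ((((i-1).factorial : ZMod p)) * (((p-i).factorial : ZMod p)))) := by ring
        _ = -((-1)^(i+1) * (-1)^i) := by rw [e1, e2]
        _ = 1 := by rw [← pow_add]; rw [show i + 1 + i = 2*i+1 by ring, pow_succ, pow_mul]; simp
    push_cast at hne hrhs ⊢
    rw [hne, hrhs]
  rw [key]
  rw [neg_mul, mul_inv_cancel₀ hu]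

/-- Mod-`p` Oort–Tate relations: with `s * t = 0`, `a^p = t * a`, `b^p = t * b`,
for all `m, n ∈ 𝔽_p` there is a unit `u ∈ Rˣ` with
`((m·a ∔ n·b)^(p-1) - t) = u * ((m·a + n·b)^(p-1) - t)`, where
`x ∔ y = x + y + s * g(x,y)` and `g(X,Y) = ∑_{i=1}^{p-1} (i!(p-i)!)⁻¹ X^i Y^(p-i)`. -/
theorem stmt9 (p : ℕ) [Fact p.Prime] (R : Type) [CommRing R] [CharP R p]
    (s t a b : R) (hst : s * t = 0) (ha : a ^ p = t * a) (hb : b ^ p = t * b) :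
    ∀ m n : ZMod p,
      let φ : ZMod p →+* R := ZMod.castHom (dvd_refl p) R
      let g : MvPolynomial (Fin 2) (ZMod p) :=
        ∑ i ∈ Finset.Icc 1 (p - 1),
          C (((i.factorial * (p - i).factorial : ℕ) : ZMod p))⁻¹ * X 0 ^ i * X 1 ^ (p - i)
      let dadd : R → R → R := fun x y => x + y + s * eval₂ φ ![x, y] g
      ∃ u : Rˣ,
        (dadd (φ m * a) (φ n * b)) ^ (p - 1) - t =
          (u : R) * ((φ m * a + φ n * b) ^ (p - 1) - t) := by
  intro m n φ g dadd
  have hp : p.Prime := Fact.out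
  have hp2 : 2 ≤ p := hp.two_le
  set x : R := φ m * a with hxdef
  set y : R := φ n * b with hydef
  -- basic power relations
  have hx : x ^ p = t * x := by
    rw [hxdef, mul_pow, ← map_pow, ZMod.pow_card, ha]; ring
  have hy : y ^ p = t * y := by
    rw [hydef, mul_pow, ← map_pow, ZMod.pow_card, hb]; ring
  have hsx : ∀ k, p ≤ k → s * x ^ k = 0 := by
    intro k hk
    obtain ⟨j, rfl⟩ := Nat.exists_eq_add_of_le hk
    calc s * x ^ (p + j) = (s * t) * (x * x ^ j) := by rw [pow_add, hx]; ring
      _ = 0 := by rw [hst]; ring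
  have hsy : ∀ k, p ≤ k → s * y ^ k = 0 := by
    intro k hk
    obtain ⟨j, rfl⟩ := Nat.exists_eq_add_of_le hk
    calc s * y ^ (p + j) = (s * t) * (y * y ^ j) := by rw [pow_add, hy]; ring
      _ = 0 := by rw [hst]; ring
  -- coefficients
  set c : ℕ → R := fun i => φ ((((i.factorial * (p - i).factorial : ℕ)) : ZMod p)⁻¹) with hcdef
  set Gv : R := ∑ i ∈ Finset.Icc 1 (p-1), c i * (x ^ i * y ^ (p - i)) with hGvdef
  have hG : eval₂ φ ![x, y] g = Gv := by
    rw [hGvdef]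
    simp only [g, eval₂_sum, eval₂_mul, eval₂_pow, eval₂_C, eval₂_X,
      Matrix.cons_val_zero, Matrix.cons_val_one, Matrix.head_cons, hcdef]
    exact Finset.sum_congr rfl fun i _ => by ring
  -- ν² = 0
  have hnu2 : (s * Gv) * (s * Gv) = 0 := by
    rw [hGvdef, Finset.mul_sum, Finset.sum_mul_sum]
    apply Finset.sum_eq_zero
    intro i hi
    apply Finset.sum_eq_zero
    intro j hj
    simp only [Finset.mem_Icc] at hi hj
    rcases le_or_gt p (i + j) with h | h
    · linear_combination (c i * c j * s * (y ^ (p - i) * y ^ (p - j))) * hsx (i+j) h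
    · have h2 : p ≤ (p - i) + (p - j) := by omega
      linear_combination (c i * c j * s * (x ^ i * x ^ j)) * hsy ((p-i)+(p-j)) h2
  -- w^(p-2) * ν = s x^(p-1) y^(p-1)
  have hw2nu : (x + y) ^ (p-2) * (s * Gv) = s * (x ^ (p-1) * y ^ (p-1)) := by
    rw [hGvdef, add_pow, Finset.mul_sum, Finset.sum_mul_sum,
      show p - 2 + 1 = p - 1 by omega]
    have inner : ∀ k ∈ Finset.range (p-1),
        (∑ i ∈ Finset.Icc 1 (p-1),
          (x ^ k * y ^ (p-2-k) * ((p-2).choose k : R)) * (s * (c i * (x ^ i * y ^ (p - i)))))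
        = -(s * (x ^ (p-1) * y ^ (p-1))) := by
      intro k hk
      rw [Finset.mem_range] at hk
      have hkle : k ≤ p - 2 := by omega
      rw [Finset.sum_eq_single_of_mem (p-1-k) (by rw [Finset.mem_Icc]; omega)]
      · -- diagonal term
        have hcoef : ((((p-2).choose (p-1-(p-1-k)) : ℕ)) : ZMod p)
              * ((((p-1-k).factorial * (p - (p-1-k)).factorial : ℕ)) : ZMod p)⁻¹ = -1 :=
          choose_coef p (p-1-k) (by omega) (by omega)
        rw [show p - 1 - (p-1-k) = k by omega] at hcoef
        have hφ : (((p-2).choose k : ℕ) : R) * c (p-1-k) = -1 := by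
          rw [hcdef]
          calc (((p-2).choose k : ℕ) : R) * φ ((((p-1-k).factorial * (p - (p-1-k)).factorial : ℕ) : ZMod p)⁻¹)
              = φ (((((p-2).choose k : ℕ)) : ZMod p)
                  * ((((p-1-k).factorial * (p - (p-1-k)).factorial : ℕ)) : ZMod p)⁻¹) := by
                rw [map_mul, map_natCast]
            _ = φ (-1) := by rw [hcoef]
            _ = -1 := by rw [map_neg, map_one]
        calc (x ^ k * y ^ (p-2-k) * ((p-2).choose k : R)) * (s * (c (p-1-k) * (x ^ (p-1-k) * y ^ (p - (p-1-k)))))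
            = ((((p-2).choose k : ℕ) : R) * c (p-1-k)) * (s * ((x ^ k * x ^ (p-1-k)) * (y ^ (p-2-k) * y ^ (p - (p-1-k))))) := by
              ring
          _ = -(s * (x ^ (p-1) * y ^ (p-1))) := by
              rw [hφ, ← pow_add, ← pow_add, show k + (p-1-k) = p-1 by omega,
                show p-2-k + (p - (p-1-k)) = p-1 by omega]
              ring
      · -- off-diagonal terms vanish
        intro i hi hne
        rw [Finset.mem_Icc] at hi
        rcases le_or_gt p (k + i) with h | h
        · linear_combination (y ^ (p-2-k) * (((p-2).choose k : ℕ) : R) * (c i * y ^ (p-i))) * hsx (k+i) h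
        · have h2 : p ≤ (p-2-k) + (p-i) := by omega
          linear_combination (x ^ k * (((p-2).choose k : ℕ) : R) * (c i * x ^ i)) * hsy ((p-2-k)+(p-i)) h2
    rw [Finset.sum_congr rfl inner, Finset.sum_const, Finset.card_range, nsmul_eq_mul]
    have hpm1 : ((p - 1 : ℕ) : R) = -1 := by
      have h := congrArg (Nat.cast : ℕ → R) (show (p-1) + 1 = p by omega)
      push_cast at h
      rw [CharP.cast_eq_zero R p] at h
      linear_combination h
    rw [hpm1]; ring
  -- s x^(p-1) * W = s x^(p-1) y^(p-1)
  have hlamW : s * x ^ (p-1) * ((x + y) ^ (p-1) - t) = s * (x ^ (p-1) * y ^ (p-1)) := by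
    have ht0 : s * x ^ (p-1) * t = 0 := by linear_combination (x ^ (p-1)) * hst
    rw [mul_sub, ht0, sub_zero, add_pow, Finset.mul_sum,
      show p - 1 + 1 = p by omega]
    rw [Finset.sum_eq_single_of_mem 0 (Finset.mem_range.mpr (by omega))]
    · simp only [pow_zero, Nat.sub_zero, Nat.choose_zero_right, Nat.cast_one]
      ring
    · intro k hk hne
      have hkp : p ≤ (p-1) + k := by omega
      linear_combination (y ^ (p-1-k) * (((p-1).choose k : ℕ) : R)) * hsx ((p-1)+k) hkp
  -- binomial with square-zero element
  have hbin : ∀ n : ℕ, (x + y + s * Gv) ^ (n+1)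
      = (x + y) ^ (n+1) + ((n : R) + 1) * ((x + y) ^ n * (s * Gv)) := by
    intro n
    induction n with
    | zero => push_cast; ring
    | succ n ih =>
      calc (x + y + s * Gv) ^ (n+1+1) = (x + y + s * Gv) ^ (n+1) * (x + y + s * Gv) := by ring
        _ = ((x + y) ^ (n+1) + ((n : R) + 1) * ((x + y) ^ n * (s * Gv))) * (x + y + s * Gv) := by rw [ih]
        _ = (x + y) ^ (n+1+1) + (((n : R) + 1) + 1) * ((x + y) ^ (n+1) * (s * Gv))
            + (((n : R) + 1) * (x + y) ^ n) * ((s * Gv) * (s * Gv)) := by ring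
        _ = (x + y) ^ (n+1+1) + (((n+1 : ℕ) : R) + 1) * ((x + y) ^ (n+1) * (s * Gv)) := by
            rw [hnu2]; push_cast; ring
  have hD : (x + y + s * Gv) ^ (p-1)
      = (x + y) ^ (p-1) + (((p-2 : ℕ) : R) + 1) * ((x + y) ^ (p-2) * (s * Gv)) := by
    rw [show p - 1 = (p-2) + 1 by omega]
    exact hbin (p-2)
  have hpm2 : (((p-2 : ℕ) : R) + 1) = -1 := by
    have h := congrArg (Nat.cast : ℕ → R) (show (p-2) + 1 + 1 = p by omega)
    push_cast at h
    rw [CharP.cast_eq_zero R p] at h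
    linear_combination h
  -- the unit
  have hll : (s * x ^ (p-1)) * (s * x ^ (p-1)) = 0 := by
    linear_combination s * hsx ((p-1)+(p-1)) (by omega)
  refine ⟨⟨1 - s * x ^ (p-1), 1 + s * x ^ (p-1), by linear_combination -hll, by linear_combination -hll⟩, ?_⟩
  show (dadd x y) ^ (p-1) - t = (1 - s * x ^ (p-1)) * ((x + y) ^ (p-1) - t)
  simp only [dadd, hG]
  rw [hD, hpm2, hw2nu]
  linear_combination hlamW
end

section
/- Let p be a prime. The 𝔽_p-algebra 𝔽_p[A,B,C,D]/(A^p − A, B^p − B, C^p − C, D^p − D, { ((m·A + n·B)^{p−1} − 1)·((m·C + n·D)^{p−1} − 1), ((m·A + n·C)^{p−1} − 1)·((m·B + n·D)^{p−1} − 1) : (m,n) ∈ 𝔽_p², (m,n) ≠ (0,0) }) is a finite-dimensional 𝔽_p-vector space of dimension (p²−1)(p²−p), the order of GL₂(𝔽_p). -/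
/-!
Since `t ^ (p - 1) - 1` vanishes exactly at `t ≠ 0`, a point `x = (a, b, c, d)` of `𝔽_p⁴` is a zero
of the primitivity relations iff every nonzero combination of the columns and of the rows of
`!![a, b; c, d]` is nonzero, i.e. iff the matrix is invertible; at a singular matrix the relation
coming from a kernel vector takes the value `1`. Together with the field equations `X_i ^ p = X_i`,
which generate the ideal of all polynomials vanishing on `𝔽_p⁴`, the relations therefore generate
the full vanishing ideal of `GL₂(𝔽_p) ⊆ 𝔽_p⁴`, and the quotient is the algebra of `𝔽_p`-valued
functions on `GL₂(𝔽_p)`.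
-/

open MvPolynomial Matrix

theorem exists_lt_pow_eq_of_pow_eq_self {M : Type*} [Monoid M] {y : M} {q : ℕ} (hq : 1 < q)
    (hy : y ^ q = y) (d : ℕ) : ∃ e < q, y ^ d = y ^ e := by
  induction d using Nat.strong_induction_on with
  | _ d ih =>
    by_cases hd : d < q
    · exact ⟨d, hd, rfl⟩
    obtain ⟨e, he, hde⟩ := ih (d - q + 1) (by omega)
    refine ⟨e, he, ?_⟩
    calc y ^ d = y ^ (d - q) * y ^ q := by rw [← pow_add]; congr 1; omega
      _ = y ^ e := by rw [hy, ← pow_succ, hde]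

theorem FiniteField.pow_card_sub_one_eq_one_iff {K : Type*} [Field K] [Fintype K] {a : K} :
    a ^ (Fintype.card K - 1) = 1 ↔ a ≠ 0 := by
  refine ⟨fun h ha => ?_, FiniteField.pow_card_sub_one_eq_one a⟩
  have : Fintype.card K - 1 ≠ 0 := by have := Fintype.one_lt_card (α := K); omega
  simp [ha, zero_pow this] at h

theorem FiniteField.pow_card_sub_one_sub_one_mul_eq_zero_iff {K : Type*} [Field K] [Fintype K]
    {a b : K} :
    (a ^ (Fintype.card K - 1) - 1) * (b ^ (Fintype.card K - 1) - 1) = 0 ↔ a ≠ 0 ∨ b ≠ 0 := by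
  simp only [mul_eq_zero, sub_eq_zero, FiniteField.pow_card_sub_one_eq_one_iff]

namespace MvPolynomial

-- `eq_zero_of_eval_eq_zero` needs `σ` and `K` in the same universe.
universe u

variable {K σ : Type u} [Field K] [Fintype K]

variable (K σ) in
def fieldEquations : Set (MvPolynomial σ K) := {z | ∃ i : σ, z = X i ^ Fintype.card K - X i}

theorem span_fieldEquations_le_vanishingIdeal (V : Set (σ → K)) :
    Ideal.span (fieldEquations K σ) ≤ vanishingIdeal K V := by
  rw [Ideal.span_le]
  rintro - ⟨i, rfl⟩ x -
  simp [FiniteField.pow_card]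

theorem exists_mem_restrictDegree_mk_eq [Fintype σ] (f : MvPolynomial σ K) :
    ∃ g ∈ restrictDegree σ K (Fintype.card K - 1),
      Ideal.Quotient.mk (Ideal.span (fieldEquations K σ)) f =
        Ideal.Quotient.mk (Ideal.span (fieldEquations K σ)) g := by
  set π := Ideal.Quotient.mk (Ideal.span (fieldEquations K σ))
  induction f using MvPolynomial.induction_on' with
  | add f₁ f₂ ih₁ ih₂ =>
    obtain ⟨g₁, hg₁, hfg₁⟩ := ih₁
    obtain ⟨g₂, hg₂, hfg₂⟩ := ih₂
    exact ⟨g₁ + g₂, add_mem hg₁ hg₂, by rw [map_add, map_add, hfg₁, hfg₂]⟩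
  | monomial d c =>
    have hX (i : σ) : π (X i) ^ Fintype.card K = π (X i) := by
      rw [← map_pow, Ideal.Quotient.eq]
      exact Ideal.subset_span ⟨i, rfl⟩
    choose e he hde using fun i =>
      exists_lt_pow_eq_of_pow_eq_self Fintype.one_lt_card (hX i) (d i)
    refine ⟨monomial (Finsupp.equivFunOnFinite.symm e) c, ?_, ?_⟩
    · simpa [restrictDegree] using Or.inl fun i => Nat.le_sub_one_of_lt (he i)
    · simp only [monomial_eq, Finsupp.prod_fintype _ _ (fun i => pow_zero _), map_mul, map_prod,
        map_pow]
      simp [hde]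

theorem mem_span_fieldEquations_of_eval_eq_zero [Fintype σ] {f : MvPolynomial σ K}
    (hf : ∀ x, eval x f = 0) : f ∈ Ideal.span (fieldEquations K σ) := by
  obtain ⟨g, hg, hfg⟩ := exists_mem_restrictDegree_mk_eq f
  rw [Ideal.Quotient.eq] at hfg
  have hg0 : g = 0 := eq_zero_of_eval_eq_zero σ K g (fun x => by
    simpa [hf x] using span_fieldEquations_le_vanishingIdeal Set.univ hfg x trivial) hg
  simpa [hg0] using hfg

theorem exists_eval_eq [Fintype σ] (e : (σ → K) → K) : ∃ f : MvPolynomial σ K, ∀ x, eval x f = e x := by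
  classical
  refine ⟨∑ y, C (e y) * indicator y, fun x => ?_⟩
  rw [map_sum, Fintype.sum_eq_single x fun y hy => ?_]
  · simp [eval_indicator_apply_eq_one]
  · simp [eval_indicator_apply_eq_zero _ _ (Ne.symm hy)]

theorem mem_span_of_mem_vanishingIdeal [Fintype σ] {V : Set (σ → K)} {G : Set (MvPolynomial σ K)}
    (hG : ∀ x ∉ V, ∃ g ∈ G, eval x g ≠ 0) {f : MvPolynomial σ K} (hf : f ∈ vanishingIdeal K V) :
    f ∈ Ideal.span (fieldEquations K σ ∪ G) := by
  classical
  choose g hgG hg using hG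
  set E : MvPolynomial σ K := ∑ x : ↥Vᶜ, C (eval x.1 (g x.1 x.2))⁻¹ * indicator x.1 * g x.1 x.2
  have hE : E ∈ Ideal.span G :=
    sum_mem fun x _ => Ideal.mul_mem_left _ _ (Ideal.subset_span (hgG x.1 x.2))
  have hEval (y : σ → K) : eval y E = if y ∈ V then 0 else 1 := by
    simp only [E, map_sum, map_mul, eval_C]
    split_ifs with hy
    · refine Finset.sum_eq_zero fun x _ => ?_
      rw [eval_indicator_apply_eq_zero _ _ (ne_of_mem_of_not_mem hy x.2), mul_zero, zero_mul]
    · rw [Fintype.sum_eq_single ⟨y, hy⟩ fun x hx => ?_]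
      · rw [eval_indicator_apply_eq_one, mul_one, inv_mul_cancel₀ (hg y hy)]
      · rw [eval_indicator_apply_eq_zero _ _ fun h => hx (Subtype.ext h.symm), mul_zero, zero_mul]
  have hfE : f - f * E ∈ Ideal.span (fieldEquations K σ) := by
    refine mem_span_fieldEquations_of_eval_eq_zero fun y => ?_
    by_cases hy : y ∈ V
    · simp [hEval, hy, show eval y f = 0 from hf y hy]
    · simp [hEval, hy]
  rw [← sub_add_cancel f (f * E)]
  exact add_mem (Ideal.span_mono Set.subset_union_left hfE)
      (Ideal.mul_mem_left _ _ (Ideal.span_mono Set.subset_union_right hE))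

theorem span_fieldEquations_union_eq_vanishingIdeal [Fintype σ] {V : Set (σ → K)}
    {G : Set (MvPolynomial σ K)} (hGV : G ⊆ vanishingIdeal K V)
    (hG : ∀ x ∉ V, ∃ g ∈ G, eval x g ≠ 0) :
    Ideal.span (fieldEquations K σ ∪ G) = vanishingIdeal K V :=
  le_antisymm
    (Ideal.span_le.mpr (Set.union_subset
      (Ideal.span_le.mp (span_fieldEquations_le_vanishingIdeal V)) hGV))
    fun _ => mem_span_of_mem_vanishingIdeal hG

variable (K) in
noncomputable def quotientVanishingIdealAlgEquiv [Fintype σ] (V : Set (σ → K)) :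
    (MvPolynomial σ K ⧸ vanishingIdeal K V) ≃ₐ[K] (V → K) :=
  let Φ : MvPolynomial σ K →ₐ[K] (V → K) := AlgHom.pi fun x => aeval x.1
  have hΦ : Function.Surjective Φ := fun e => by
    classical
    obtain ⟨f, hf⟩ := exists_eval_eq fun x => if hx : x ∈ V then e ⟨x, hx⟩ else 0
    refine ⟨f, _root_.funext fun x => ?_⟩
    simp [Φ, hf, x.2]
  have hker : RingHom.ker Φ = vanishingIdeal K V := by
    ext f
    simp [Φ, RingHom.mem_ker, _root_.funext_iff]
  (Ideal.quotientEquivAlgOfEq K hker.symm).trans (Ideal.quotientKerAlgEquivOfSurjective hΦ)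

theorem finite_quotient_vanishingIdeal [Fintype σ] (V : Set (σ → K)) :
    Module.Finite K (MvPolynomial σ K ⧸ vanishingIdeal K V) :=
  Module.Finite.equiv (quotientVanishingIdealAlgEquiv K V).symm.toLinearEquiv

theorem finrank_quotient_vanishingIdeal [Fintype σ] (V : Set (σ → K)) :
    Module.finrank K (MvPolynomial σ K ⧸ vanishingIdeal K V) = Nat.card V := by
  classical
  rw [(quotientVanishingIdealAlgEquiv K V).toLinearEquiv.finrank_eq,
    Module.finrank_fintype_fun_eq_card, Nat.card_eq_fintype_card]

end MvPolynomial

theorem Matrix.card_det_ne_zero {K n : Type*} [Field K] [Fintype n] [DecidableEq n] :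
    Nat.card {M : Matrix n n K // M.det ≠ 0} = Nat.card (GL n K) := by
  refine Nat.card_congr ((Equiv.ofInjective _ Units.val_injective).trans
    (Equiv.subtypeEquivRight fun M => ?_)).symm
  rw [Set.mem_range, ← isUnit_iff_ne_zero, ← Matrix.isUnit_iff_isUnit_det]
  rfl

theorem Matrix.vec2_ne_zero_iff {α : Type*} [Zero α] {a b : α} : ![a, b] ≠ 0 ↔ a ≠ 0 ∨ b ≠ 0 := by
  simp only [ne_eq, Matrix.cons_eq_zero_iff, Matrix.zero_empty, and_true, not_and_or]

def matrixOfFin4 {R : Type*} : (Fin 4 → R) ≃ Matrix (Fin 2) (Fin 2) R where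
  toFun x := !![x 0, x 1; x 2, x 3]
  invFun M := ![M 0 0, M 0 1, M 1 0, M 1 1]
  left_inv x := by ext i; fin_cases i <;> rfl
  right_inv M := by ext i j; fin_cases i <;> fin_cases j <;> rfl

theorem matrixOfFin4_mulVec {R : Type*} [CommSemiring R] (x : Fin 4 → R) (m n : R) :
    matrixOfFin4 x *ᵥ ![m, n] = ![m * x 0 + n * x 1, m * x 2 + n * x 3] := by
  ext i; fin_cases i <;> simp [matrixOfFin4]

theorem vecMul_matrixOfFin4 {R : Type*} [CommSemiring R] (x : Fin 4 → R) (m n : R) :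
    ![m, n] ᵥ* matrixOfFin4 x = ![m * x 0 + n * x 2, m * x 1 + n * x 3] := by
  ext i; fin_cases i <;> simp [matrixOfFin4, Matrix.vecMul, dotProduct, Fin.sum_univ_two]

theorem card_setOf_det_matrixOfFin4_ne_zero {K : Type*} [Field K] :
    Nat.card {x : Fin 4 → K | (matrixOfFin4 x).det ≠ 0} = Nat.card (GL (Fin 2) K) :=
  (Nat.card_congr (matrixOfFin4.subtypeEquiv fun _ => Iff.rfl)).trans Matrix.card_det_ne_zero

section GL2

variable (K : Type*) [Field K] [Fintype K]

def primitivityRelations : Set (MvPolynomial (Fin 4) K) :=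
  {z | ∃ m n : K, (m ≠ 0 ∨ n ≠ 0) ∧
    (z = ((C m * X 0 + C n * X 1) ^ (Fintype.card K - 1) - 1) *
         ((C m * X 2 + C n * X 3) ^ (Fintype.card K - 1) - 1) ∨
     z = ((C m * X 0 + C n * X 2) ^ (Fintype.card K - 1) - 1) *
         ((C m * X 1 + C n * X 3) ^ (Fintype.card K - 1) - 1))}

variable {K}

theorem primitivityRelations_subset_vanishingIdeal :
    primitivityRelations K ⊆ vanishingIdeal K {x : Fin 4 → K | (matrixOfFin4 x).det ≠ 0} := by
  rintro z ⟨m, n, hmn, rfl | rfl⟩ x (hx : (matrixOfFin4 x).det ≠ 0)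
  all_goals
    rw [← Matrix.vec2_ne_zero_iff] at hmn
    simp only [aeval_eq_eval, map_mul, map_sub, map_pow, map_add, eval_C, eval_X, map_one,
      FiniteField.pow_card_sub_one_sub_one_mul_eq_zero_iff, ← Matrix.vec2_ne_zero_iff]
  · rw [← matrixOfFin4_mulVec]
    exact fun h => hx (Matrix.exists_mulVec_eq_zero_iff.mp ⟨_, hmn, h⟩)
  · rw [← vecMul_matrixOfFin4]
    exact fun h => hx (Matrix.exists_vecMul_eq_zero_iff.mp ⟨_, hmn, h⟩)

theorem exists_primitivityRelations_eval_ne_zero (x : Fin 4 → K)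
    (hx : x ∉ {x : Fin 4 → K | (matrixOfFin4 x).det ≠ 0}) :
    ∃ g ∈ primitivityRelations K, eval x g ≠ 0 := by
  obtain ⟨v, hv, hxv⟩ := Matrix.exists_mulVec_eq_zero_iff.mpr (not_not.mp hx)
  have hv2 : v = ![v 0, v 1] := by ext i; fin_cases i <;> rfl
  rw [hv2] at hv hxv
  refine ⟨_, ⟨v 0, v 1, Matrix.vec2_ne_zero_iff.mp hv, Or.inl rfl⟩, ?_⟩
  simp only [map_mul, map_sub, map_pow, map_add, eval_C, eval_X, map_one, ne_eq,
    FiniteField.pow_card_sub_one_sub_one_mul_eq_zero_iff, ← Matrix.vec2_ne_zero_iff, not_not]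
  rwa [← matrixOfFin4_mulVec]

end GL2

/-- The coordinate ring of the full level structure on `G × G` for the
Oort–Tate group with `s = 0, t = 1` (a form of `ℤ/pℤ`), namely
`𝔽_p[A,B,C,D]/(A^p - A, …, D^p - D, {((mA+nB)^(p-1)-1)((mC+nD)^(p-1)-1),
((mA+nC)^(p-1)-1)((mB+nD)^(p-1)-1) : (m,n) ≠ (0,0)})`, is a finite-dimensional
`𝔽_p`-vector space of dimension `|GL₂(𝔽_p)| = (p²-1)(p²-p)`. -/
theorem stmt13 (p : ℕ) [Fact p.Prime] :
    let Q := MvPolynomial (Fin 4) (ZMod p) ⧸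
      Ideal.span {z : MvPolynomial (Fin 4) (ZMod p) |
        (∃ i : Fin 4, z = X i ^ p - X i) ∨
        (∃ m n : ZMod p, (m ≠ 0 ∨ n ≠ 0) ∧
          (z = ((C m * X 0 + C n * X 1) ^ (p - 1) - 1) *
               ((C m * X 2 + C n * X 3) ^ (p - 1) - 1) ∨
           z = ((C m * X 0 + C n * X 2) ^ (p - 1) - 1) *
               ((C m * X 1 + C n * X 3) ^ (p - 1) - 1)))}
    Module.Finite (ZMod p) Q ∧
    Module.finrank (ZMod p) Q = (p ^ 2 - 1) * (p ^ 2 - p) := by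
  have hI := span_fieldEquations_union_eq_vanishingIdeal (K := ZMod p)
    primitivityRelations_subset_vanishingIdeal exists_primitivityRelations_eval_ne_zero
  simp only [fieldEquations, primitivityRelations, ZMod.card, Set.union_def, Set.mem_ofPred_eq] at hI
  rw [hI]
  refine ⟨finite_quotient_vanishingIdeal _, ?_⟩
  rw [finrank_quotient_vanishingIdeal, card_setOf_det_matrixOfFin4_ne_zero, Matrix.card_GL_field,
    ZMod.card, Fin.prod_univ_two]
  norm_num
end

section
/- Let p be a prime. There exists a ℤ_p-algebra isomorphism between ℤ_p[X]/(X^p − X) and the product ring ℤ_p^p of p copies of the p-adic integers (i.e. the ring of functions Fin p → ℤ_p). -/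
/-!
Over `ℤ_p`, which is Henselian with residue field `𝔽_p`, every `a ∈ 𝔽_p` is a simple root of
`X ^ p - X` (its derivative is `-1` there), so it lifts to a root `χ(a) ∈ ℤ_p`. Lifts of distinct
residues differ by a unit, hence `X ^ p - X = ∏ₐ (X - χ(a))` with pairwise comaximal factors, and
the Chinese remainder theorem gives `ℤ_p[X]/(X ^ p - X) ≅ ∏ₐ ℤ_p[X]/(X - χ(a)) ≅ ℤ_p ^ p`.
-/

open Polynomial IsLocalRing

namespace Polynomial

variable {R ι : Type*} [CommRing R]

theorem monic_X_pow_sub_X {n : ℕ} (hn : 1 < n) : (X ^ n - X : R[X]).Monic :=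
  monic_X_pow_sub (degree_X_le.trans_lt (by exact_mod_cast hn))

variable [Fintype ι] {z : ι → R}

theorem Monic.eq_prod_X_sub_C [Nontrivial R] {f : R[X]} (hf : f.Monic)
    (hdeg : f.natDegree ≤ Fintype.card ι) (hz : Pairwise fun i j => IsUnit (z i - z j))
    (hroot : ∀ i, f.IsRoot (z i)) :
    f = ∏ i, (X - C (z i)) := by
  refine eq_of_monic_of_dvd_of_natDegree_le (monic_prod_of_monic _ _ fun i _ => monic_X_sub_C _)
    hf ?_ ?_
  · exact Finset.prod_dvd_of_coprime (fun _ _ _ _ hij => isCoprime_X_sub_C_of_isUnit_sub (hz hij))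
      fun i _ => dvd_iff_isRoot.mpr (hroot i)
  · rwa [natDegree_finsetProd_X_sub_C_eq_card, Finset.card_univ]

noncomputable def quotientSpanProdXSubCAlgEquivPi (z : ι → R)
    (hz : Pairwise fun i j => IsUnit (z i - z j)) :
    (R[X] ⧸ Ideal.span {∏ i, (X - C (z i))}) ≃ₐ[R] (ι → R) :=
  have hcop : Pairwise fun i j => IsCoprime (Ideal.span {X - C (z i)}) (Ideal.span {X - C (z j)}) :=
    fun _ _ hij => (Ideal.isCoprime_span_singleton_iff _ _).mpr
      (isCoprime_X_sub_C_of_isUnit_sub (hz hij))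
  (Ideal.quotientEquivAlgOfEq R (Ideal.iInf_span_singleton fun _ _ hij =>
      isCoprime_X_sub_C_of_isUnit_sub (hz hij)).symm).trans <|
    (AlgEquiv.ofRingEquiv (f := Ideal.quotientInfRingEquivPiQuotient _ hcop) fun _ => rfl).trans <|
      AlgEquiv.piCongrRight fun i => quotientSpanXSubCAlgEquiv (z i)

end Polynomial

section Henselian

variable {R K : Type*} [CommRing R] [Field K]

theorem HenselianLocalRing.of_henselianRing [IsLocalRing R]
    [HenselianRing R (maximalIdeal R)] : HenselianLocalRing R where
  is_henselian f hf a₀ h₁ h₂ := HenselianRing.is_henselian f hf a₀ h₁ (h₂.map _)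

instance (p : ℕ) [Fact p.Prime] : HenselianLocalRing ℤ_[p] :=
  .of_henselianRing

theorem IsLocalRing.isUnit_iff_map_ne_zero [IsLocalRing R] (φ : R →+* K)
    (hφ : Function.Surjective φ) {x : R} : IsUnit x ↔ φ x ≠ 0 := by
  rw [← notMem_maximalIdeal, ← ker_eq_maximalIdeal φ hφ, RingHom.mem_ker]

theorem IsLocalRing.isUnit_sub_of_map_ne [IsLocalRing R] (φ : R →+* K)
    (hφ : Function.Surjective φ) {a b : R} (h : φ a ≠ φ b) : IsUnit (a - b) := by
  rwa [isUnit_iff_map_ne_zero φ hφ, map_sub, sub_ne_zero]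

theorem HenselianLocalRing.exists_pow_card_eq_self [HenselianLocalRing R] [Fintype K]
    (φ : R →+* K) (hφ : Function.Surjective φ) (a₀ : K) :
    ∃ a : R, a ^ Fintype.card K = a ∧ φ a = a₀ := by
  obtain ⟨b, rfl⟩ := hφ a₀
  have hker := ker_eq_maximalIdeal φ hφ
  -- `φ b` is a root of `X ^ q - X` over `K`, and a simple one because `q = 0` in `K`.
  obtain ⟨a, hroot, hab⟩ := HenselianLocalRing.is_henselian _
    (monic_X_pow_sub_X (Fintype.one_lt_card (α := K))) b
    (by simp [← hker, FiniteField.pow_card])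
    ((isUnit_iff_map_ne_zero φ hφ).mpr (by simp [derivative_X_pow]))
  refine ⟨a, by simpa [sub_eq_zero] using hroot, ?_⟩
  rwa [← hker, RingHom.mem_ker, map_sub, sub_eq_zero] at hab

end Henselian

/-- For a prime `p` there is a `ℤ_p`-algebra isomorphism
`ℤ_p[X]/(X^p - X) ≅ ℤ_p^p`. -/
theorem stmt14 (p : ℕ) [Fact p.Prime] :
    Nonempty ((Polynomial ℤ_[p] ⧸
        Ideal.span {(Polynomial.X : Polynomial ℤ_[p]) ^ p - Polynomial.X})
      ≃ₐ[ℤ_[p]] (Fin p → ℤ_[p])) := by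
  have hp : 1 < p := (Fact.out : p.Prime).one_lt
  have hsurj : Function.Surjective (PadicInt.toZMod (p := p)) := ZMod.ringHom_surjective _
  choose χ hχ_pow hχ_res using
    HenselianLocalRing.exists_pow_card_eq_self (PadicInt.toZMod (p := p)) hsurj
  rw [ZMod.card] at hχ_pow
  have hχ : Pairwise fun a b => IsUnit (χ a - χ b) := fun a b hab =>
    isUnit_sub_of_map_ne _ hsurj (by rwa [hχ_res, hχ_res])
  have hprod : (X ^ p - X : ℤ_[p][X]) = ∏ a, (X - C (χ a)) :=
    (monic_X_pow_sub_X hp).eq_prod_X_sub_C (by rw [ZMod.card]; compute_degree!; omega) hχ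
      fun a => by simp [hχ_pow]
  exact ⟨(Ideal.quotientEquivAlgOfEq _ (by rw [hprod])).trans <|
    (quotientSpanProdXSubCAlgEquivPi χ hχ).trans
      (AlgEquiv.piCongrLeft ℤ_[p] (fun _ => ℤ_[p]) (ZMod.finEquiv p).toEquiv).symm⟩
end

section
/- Let p be a prime and K a field of characteristic p. Let J ⊂ K[A,B,C,D] be the ideal generated by A^p, B^p, C^p, D^p together with the elements (m·A + n·B)^{p−1}·(m·C + n·D)^{p−1} and (m·A + n·C)^{p−1}·(m·B + n·D)^{p−1} for all (m,n) ∈ 𝔽_p² with (m,n) ≠ (0,0). Then for every matrix M ∈ GL₂(𝔽_p), viewed in GL₂(K) via the algebra map 𝔽_p → K, both the K-algebra endomorphism σ_M of K[A,B,C,D] given by right multiplication of the variable matrix, i.e. A ↦ M₁₁A + M₂₁B, B ↦ M₁₂A + M₂₂B, C ↦ M₁₁C + M₂₁D, D ↦ M₁₂C + M₂₂D, and the endomorphism τ_M given by left multiplication, i.e. A ↦ M₁₁A + M₁₂C, C ↦ M₂₁A + M₂₂C, B ↦ M₁₁B + M₁₂D, D ↦ M₂₁B + M₂₂D, map J onto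 J (the image ideal of J under each substitution equals J). -/
open MvPolynomial

set_option synthInstance.maxHeartbeats 1000000
set_option maxHeartbeats 1000000
set_option linter.unusedSectionVars false
set_option linter.unusedVariables false

section Aux
variable {p : ℕ} [Fact p.Prime] {K : Type} [Field K] [CharP K p]

/-- The generating set of the ideal `J`. -/
def Sgen (φ : ZMod p →+* K) : Set (MvPolynomial (Fin 4) K) :=
  {z : MvPolynomial (Fin 4) K |
      (∃ i : Fin 4, z = X i ^ p) ∨
      (∃ m n : ZMod p, (m ≠ 0 ∨ n ≠ 0) ∧
        (z = (C (φ m) * X 0 + C (φ n) * X 1) ^ (p - 1) *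
             (C (φ m) * X 2 + C (φ n) * X 3) ^ (p - 1) ∨
         z = (C (φ m) * X 0 + C (φ n) * X 2) ^ (p - 1) *
             (C (φ m) * X 1 + C (φ n) * X 3) ^ (p - 1)))}

/-- Right multiplication substitution. -/
noncomputable def σmap (φ : ZMod p →+* K) (a b c d : ZMod p) :
    MvPolynomial (Fin 4) K →ₐ[K] MvPolynomial (Fin 4) K :=
  aeval ![C (φ a) * X 0 + C (φ c) * X 1, C (φ b) * X 0 + C (φ d) * X 1,
          C (φ a) * X 2 + C (φ c) * X 3, C (φ b) * X 2 + C (φ d) * X 3]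

/-- Left multiplication substitution. -/
noncomputable def τmap (φ : ZMod p →+* K) (a b c d : ZMod p) :
    MvPolynomial (Fin 4) K →ₐ[K] MvPolynomial (Fin 4) K :=
  aeval ![C (φ a) * X 0 + C (φ b) * X 2, C (φ a) * X 1 + C (φ b) * X 3,
          C (φ c) * X 0 + C (φ d) * X 2, C (φ c) * X 1 + C (φ d) * X 3]

lemma pow_p_mem (φ : ZMod p →+* K) (m n : ZMod p) (i j : Fin 4) :
    (C (φ m) * X i + C (φ n) * X j) ^ p ∈ Ideal.span (Sgen φ) := by
  rw [add_pow_char, mul_pow, mul_pow]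
  exact Ideal.add_mem _
    (Ideal.mul_mem_left _ _ (Ideal.subset_span (Or.inl ⟨i, rfl⟩)))
    (Ideal.mul_mem_left _ _ (Ideal.subset_span (Or.inl ⟨j, rfl⟩)))

lemma lin (φ : ZMod p →+* K) (m n a b c d : ZMod p) (u v : MvPolynomial (Fin 4) K) :
    C (φ m) * (C (φ a) * u + C (φ c) * v) + C (φ n) * (C (φ b) * u + C (φ d) * v)
    = C (φ (m * a + n * b)) * u + C (φ (m * c + n * d)) * v := by
  simp only [map_add, map_mul]; ring

lemma lin2 (a c m n : K) (u v u' v' : MvPolynomial (Fin 4) K) :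
    C m * (C a * u + C c * v) + C n * (C a * u' + C c * v')
    = C a * (C m * u + C n * u') + C c * (C m * v + C n * v') := by
  ring

lemma comb_ne (a b c d m n : ZMod p) (hM : IsUnit (a * d - b * c))
    (h : m ≠ 0 ∨ n ≠ 0) : m * a + n * c ≠ 0 ∨ m * b + n * d ≠ 0 := by
  by_contra hc
  push_neg at hc
  obtain ⟨h1, h2⟩ := hc
  have hdet : a * d - b * c ≠ 0 := hM.ne_zero
  have hm : m * (a * d - b * c) = (m * a + n * c) * d - (m * b + n * d) * c := by ring
  have hn : n * (a * d - b * c) = (m * b + n * d) * a - (m * a + n * c) * b := by ring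
  rw [h1, h2] at hm hn
  simp at hm hn
  rcases hm with hm | hm
  · rcases hn with hn | hn
    · rcases h with h | h <;> [exact h hm; exact h hn]
    · exact hdet hn
  · exact hdet hm

theorem key_span {R : Type*} [CommRing R] (P Q α β γ δ : R) (q : ℕ) :
    (α * P + γ * Q) ^ q * (β * P + δ * Q) ^ q ∈
      Ideal.span {P ^ (q + 1), Q ^ (q + 1), P ^ q * Q ^ q} := by
  have h : ∀ i j : ℕ, i + j = 2 * q →
      P ^ i * Q ^ j ∈ Ideal.span {P ^ (q + 1), Q ^ (q + 1), P ^ q * Q ^ q} := by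
    intro i j hij
    rcases le_or_gt (q + 1) i with hi | hi
    · obtain ⟨k, rfl⟩ := Nat.exists_eq_add_of_le hi
      have : P ^ (q + 1 + k) * Q ^ j = (P ^ k * Q ^ j) * P ^ (q + 1) := by
        rw [pow_add]; ring
      rw [this]
      exact Ideal.mul_mem_left _ _ (Ideal.subset_span (Or.inl rfl))
    rcases le_or_gt (q + 1) j with hj | hj
    · obtain ⟨k, rfl⟩ := Nat.exists_eq_add_of_le hj
      have : P ^ i * Q ^ (q + 1 + k) = (P ^ i * Q ^ k) * Q ^ (q + 1) := by
        rw [pow_add]; ring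
      rw [this]
      exact Ideal.mul_mem_left _ _ (Ideal.subset_span (Or.inr (Or.inl rfl)))
    · have hi' : i = q := by omega
      have hj' : j = q := by omega
      subst hi' hj'
      exact Ideal.subset_span (Or.inr (Or.inr rfl))
  rw [add_pow, add_pow, Finset.sum_mul_sum]
  apply Ideal.sum_mem
  intro i hi
  apply Ideal.sum_mem
  intro j hj
  simp only [Finset.mem_range] at hi hj
  have key := h (i + j) ((q - i) + (q - j)) (by omega)
  have : (α * P) ^ i * (γ * Q) ^ (q - i) * (q.choose i : R) *
      ((β * P) ^ j * (δ * Q) ^ (q - j) * (q.choose j : R)) =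
      (α ^ i * γ ^ (q - i) * (q.choose i : R) * β ^ j * δ ^ (q - j) * (q.choose j : R)) *
      (P ^ (i + j) * Q ^ ((q - i) + (q - j))) := by
    ring
  rw [this]
  exact Ideal.mul_mem_left _ _ key

lemma sigma_le (φ : ZMod p →+* K) (a b c d : ZMod p) (h : IsUnit (a * d - b * c)) :
    Ideal.map (σmap φ a b c d).toRingHom (Ideal.span (Sgen φ)) ≤ Ideal.span (Sgen φ) := by
  have hq : p - 1 + 1 = p := Nat.succ_pred_eq_of_pos (Fact.out : p.Prime).pos
  rw [Ideal.map_le_iff_le_comap, Ideal.span_le]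
  rintro z (⟨i, rfl⟩ | ⟨m, n, hmn, (rfl | rfl)⟩) <;>
      rw [SetLike.mem_coe, Ideal.mem_comap]
  · fin_cases i <;>
    · simp only [AlgHom.toRingHom_eq_coe, RingHom.coe_coe, map_pow, σmap, aeval_X,
        Matrix.cons_val_zero, Matrix.cons_val_one, Matrix.head_cons, Matrix.cons_val_two,
        Matrix.cons_val_three, Matrix.tail_cons, Matrix.head_fin_const, Fin.isValue]
      exact pow_p_mem φ _ _ _ _
  · have hne := comb_ne a c b d m n (by rwa [mul_comm c b]) hmn
    simp only [AlgHom.toRingHom_eq_coe, RingHom.coe_coe, map_mul, map_pow, map_add, σmap,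
      aeval_X, aeval_C, algebraMap_eq, Matrix.cons_val_zero, Matrix.cons_val_one,
      Matrix.head_cons, Matrix.cons_val_two, Matrix.cons_val_three, Matrix.tail_cons,
      Matrix.head_fin_const, Fin.isValue]
    rw [lin, lin]
    exact Ideal.subset_span (Or.inr ⟨_, _, hne, Or.inl rfl⟩)
  · simp only [AlgHom.toRingHom_eq_coe, RingHom.coe_coe, map_mul, map_pow, map_add, σmap,
      aeval_X, aeval_C, algebraMap_eq, Matrix.cons_val_zero, Matrix.cons_val_one,
      Matrix.head_cons, Matrix.cons_val_two, Matrix.cons_val_three, Matrix.tail_cons,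
      Matrix.head_fin_const, Fin.isValue]
    rw [lin2 (φ a) (φ c) (φ m) (φ n) (X 0) (X 1) (X 2) (X 3),
        lin2 (φ b) (φ d) (φ m) (φ n) (X 0) (X 1) (X 2) (X 3)]
    refine Ideal.span_le.mpr ?_ (key_span _ _ _ _ _ _ (p - 1))
    rintro z (rfl | rfl | rfl)
    · rw [hq]; exact pow_p_mem φ m n 0 2
    · rw [hq]; exact pow_p_mem φ m n 1 3
    · exact Ideal.subset_span (Or.inr ⟨m, n, hmn, Or.inr rfl⟩)

lemma tau_le (φ : ZMod p →+* K) (a b c d : ZMod p) (h : IsUnit (a * d - b * c)) :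
    Ideal.map (τmap φ a b c d).toRingHom (Ideal.span (Sgen φ)) ≤ Ideal.span (Sgen φ) := by
  have hq : p - 1 + 1 = p := Nat.succ_pred_eq_of_pos (Fact.out : p.Prime).pos
  rw [Ideal.map_le_iff_le_comap, Ideal.span_le]
  rintro z (⟨i, rfl⟩ | ⟨m, n, hmn, (rfl | rfl)⟩) <;>
      rw [SetLike.mem_coe, Ideal.mem_comap]
  · fin_cases i <;>
    · simp only [AlgHom.toRingHom_eq_coe, RingHom.coe_coe, map_pow, τmap, aeval_X,
        Matrix.cons_val_zero, Matrix.cons_val_one, Matrix.head_cons, Matrix.cons_val_two,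
        Matrix.cons_val_three, Matrix.tail_cons, Matrix.head_fin_const, Fin.isValue]
      exact pow_p_mem φ _ _ _ _
  · simp only [AlgHom.toRingHom_eq_coe, RingHom.coe_coe, map_mul, map_pow, map_add, τmap,
      aeval_X, aeval_C, algebraMap_eq, Matrix.cons_val_zero, Matrix.cons_val_one,
      Matrix.head_cons, Matrix.cons_val_two, Matrix.cons_val_three, Matrix.tail_cons,
      Matrix.head_fin_const, Fin.isValue]
    rw [lin2 (φ a) (φ b) (φ m) (φ n) (X 0) (X 2) (X 1) (X 3),
        lin2 (φ c) (φ d) (φ m) (φ n) (X 0) (X 2) (X 1) (X 3)]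
    refine Ideal.span_le.mpr ?_ (key_span _ _ _ _ _ _ (p - 1))
    rintro z (rfl | rfl | rfl)
    · rw [hq]; exact pow_p_mem φ m n 0 1
    · rw [hq]; exact pow_p_mem φ m n 2 3
    · exact Ideal.subset_span (Or.inr ⟨m, n, hmn, Or.inl rfl⟩)
  · have hne := comb_ne a b c d m n h hmn
    simp only [AlgHom.toRingHom_eq_coe, RingHom.coe_coe, map_mul, map_pow, map_add, τmap,
      aeval_X, aeval_C, algebraMap_eq, Matrix.cons_val_zero, Matrix.cons_val_one,
      Matrix.head_cons, Matrix.cons_val_two, Matrix.cons_val_three, Matrix.tail_cons,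
      Matrix.head_fin_const, Fin.isValue]
    rw [lin φ m n a c b d (X 0) (X 2), lin φ m n a c b d (X 1) (X 3)]
    exact Ideal.subset_span (Or.inr ⟨_, _, hne, Or.inr rfl⟩)

lemma sigma_comp (φ : ZMod p →+* K) (a b c d a' b' c' d' : ZMod p)
    (h00 : a' * a + c' * b = 1) (h01 : a' * c + c' * d = 0)
    (h10 : b' * a + d' * b = 0) (h11 : b' * c + d' * d = 1) :
    (σmap φ a b c d).comp (σmap φ a' b' c' d') = AlgHom.id K (MvPolynomial (Fin 4) K) := by
  apply MvPolynomial.algHom_ext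
  intro i
  fin_cases i <;>
    simp only [AlgHom.comp_apply, AlgHom.id_apply, σmap, aeval_X, map_add, map_mul, aeval_C,
      algebraMap_eq, Fin.reduceFinMk, Fin.mk_zero, Fin.mk_one, Matrix.cons_val_zero,
      Matrix.cons_val_one, Matrix.head_cons, Matrix.cons_val_two, Matrix.cons_val_three,
      Matrix.tail_cons, Matrix.head_fin_const, Fin.isValue]
  · rw [lin φ a' c' a b c d (X 0) (X 1), h00, h01]; simp
  · rw [lin φ b' d' a b c d (X 0) (X 1), h10, h11]; simp
  · rw [lin φ a' c' a b c d (X 2) (X 3), h00, h01]; simp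
  · rw [lin φ b' d' a b c d (X 2) (X 3), h10, h11]; simp

lemma tau_comp (φ : ZMod p →+* K) (a b c d a' b' c' d' : ZMod p)
    (k00 : a' * a + b' * c = 1) (k01 : a' * b + b' * d = 0)
    (k10 : c' * a + d' * c = 0) (k11 : c' * b + d' * d = 1) :
    (τmap φ a b c d).comp (τmap φ a' b' c' d') = AlgHom.id K (MvPolynomial (Fin 4) K) := by
  apply MvPolynomial.algHom_ext
  intro i
  fin_cases i <;>
    simp only [AlgHom.comp_apply, AlgHom.id_apply, τmap, aeval_X, map_add, map_mul, aeval_C,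
      algebraMap_eq, Fin.reduceFinMk, Fin.mk_zero, Fin.mk_one, Matrix.cons_val_zero,
      Matrix.cons_val_one, Matrix.head_cons, Matrix.cons_val_two, Matrix.cons_val_three,
      Matrix.tail_cons, Matrix.head_fin_const, Fin.isValue]
  · rw [lin φ a' b' a c b d (X 0) (X 2), k00, k01]; simp
  · rw [lin φ a' b' a c b d (X 1) (X 3), k00, k01]; simp
  · rw [lin φ c' d' a c b d (X 0) (X 2), k10, k11]; simp
  · rw [lin φ c' d' a c b d (X 1) (X 3), k10, k11]; simp

lemma sigma_ge (φ : ZMod p →+* K) (a b c d a' b' c' d' : ZMod p)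
    (h' : IsUnit (a' * d' - b' * c'))
    (h00 : a' * a + c' * b = 1) (h01 : a' * c + c' * d = 0)
    (h10 : b' * a + d' * b = 0) (h11 : b' * c + d' * d = 1) :
    Ideal.span (Sgen φ) ≤ Ideal.map (σmap φ a b c d).toRingHom (Ideal.span (Sgen φ)) := by
  intro x hx
  have hx' : σmap φ a' b' c' d' x ∈ Ideal.span (Sgen φ) :=
    sigma_le φ a' b' c' d' h' (Ideal.mem_map_of_mem _ hx)
  have hxx : (σmap φ a b c d) (σmap φ a' b' c' d' x) = x := by
    rw [← AlgHom.comp_apply, sigma_comp φ a b c d a' b' c' d' h00 h01 h10 h11, AlgHom.id_apply]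
  rw [← hxx]
  exact Ideal.mem_map_of_mem _ hx'

lemma tau_ge (φ : ZMod p →+* K) (a b c d a' b' c' d' : ZMod p)
    (h' : IsUnit (a' * d' - b' * c'))
    (k00 : a' * a + b' * c = 1) (k01 : a' * b + b' * d = 0)
    (k10 : c' * a + d' * c = 0) (k11 : c' * b + d' * d = 1) :
    Ideal.span (Sgen φ) ≤ Ideal.map (τmap φ a b c d).toRingHom (Ideal.span (Sgen φ)) := by
  intro x hx
  have hx' : τmap φ a' b' c' d' x ∈ Ideal.span (Sgen φ) :=
    tau_le φ a' b' c' d' h' (Ideal.mem_map_of_mem _ hx)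
  have hxx : (τmap φ a b c d) (τmap φ a' b' c' d' x) = x := by
    rw [← AlgHom.comp_apply, tau_comp φ a b c d a' b' c' d' k00 k01 k10 k11, AlgHom.id_apply]
  rw [← hxx]
  exact Ideal.mem_map_of_mem _ hx'

end Aux

/-- `GL₂(𝔽_p)`-invariance of the full level structure on `α_p × α_p`: the
defining ideal `J` is preserved by the substitutions given by right
multiplication (`σ_M`) and left multiplication (`τ_M`) of the variable matrix
`(A, B; C, D)` by any `M ∈ GL₂(𝔽_p)`. -/
theorem stmt16 (p : ℕ) [Fact p.Prime] (K : Type) [Field K] [CharP K p]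
    (φ : ZMod p →+* K) (hφ : φ = ZMod.castHom (dvd_refl p) K)
    (J : Ideal (MvPolynomial (Fin 4) K))
    (hJ : J = Ideal.span {z : MvPolynomial (Fin 4) K |
      (∃ i : Fin 4, z = X i ^ p) ∨
      (∃ m n : ZMod p, (m ≠ 0 ∨ n ≠ 0) ∧
        (z = (C (φ m) * X 0 + C (φ n) * X 1) ^ (p - 1) *
             (C (φ m) * X 2 + C (φ n) * X 3) ^ (p - 1) ∨
         z = (C (φ m) * X 0 + C (φ n) * X 2) ^ (p - 1) *
             (C (φ m) * X 1 + C (φ n) * X 3) ^ (p - 1)))}) :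
    ∀ M : GL (Fin 2) (ZMod p),
      Ideal.map (MvPolynomial.aeval
        ![C (φ (M.val 0 0)) * X 0 + C (φ (M.val 1 0)) * X 1,
          C (φ (M.val 0 1)) * X 0 + C (φ (M.val 1 1)) * X 1,
          C (φ (M.val 0 0)) * X 2 + C (φ (M.val 1 0)) * X 3,
          C (φ (M.val 0 1)) * X 2 + C (φ (M.val 1 1)) * X 3] :
            MvPolynomial (Fin 4) K →ₐ[K] MvPolynomial (Fin 4) K).toRingHom J = J ∧
      Ideal.map (MvPolynomial.aeval
        ![C (φ (M.val 0 0)) * X 0 + C (φ (M.val 0 1)) * X 2,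
          C (φ (M.val 0 0)) * X 1 + C (φ (M.val 0 1)) * X 3,
          C (φ (M.val 1 0)) * X 0 + C (φ (M.val 1 1)) * X 2,
          C (φ (M.val 1 0)) * X 1 + C (φ (M.val 1 1)) * X 3] :
            MvPolynomial (Fin 4) K →ₐ[K] MvPolynomial (Fin 4) K).toRingHom J = J := by
  subst hJ
  intro M
  have hMdet : IsUnit (M.val 0 0 * M.val 1 1 - M.val 0 1 * M.val 1 0) := by
    have := (Matrix.isUnit_iff_isUnit_det M.val).mp ⟨M, rfl⟩
    rwa [Matrix.det_fin_two] at this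
  have hNdet : IsUnit ((M⁻¹).val 0 0 * (M⁻¹).val 1 1 - (M⁻¹).val 0 1 * (M⁻¹).val 1 0) := by
    have := (Matrix.isUnit_iff_isUnit_det (M⁻¹).val).mp ⟨M⁻¹, rfl⟩
    rwa [Matrix.det_fin_two] at this
  have hMN : M.val * (M⁻¹).val = 1 := by
    have := Units.mul_inv M
    exact_mod_cast this
  have hNM : (M⁻¹).val * M.val = 1 := by
    have := Units.inv_mul M
    exact_mod_cast this
  have eMN : ∀ i j : Fin 2, M.val i 0 * (M⁻¹).val 0 j + M.val i 1 * (M⁻¹).val 1 j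
      = (1 : Matrix (Fin 2) (Fin 2) (ZMod p)) i j := by
    intro i j
    have := congrFun (congrFun hMN i) j
    rwa [Matrix.mul_apply, Fin.sum_univ_two] at this
  have eNM : ∀ i j : Fin 2, (M⁻¹).val i 0 * M.val 0 j + (M⁻¹).val i 1 * M.val 1 j
      = (1 : Matrix (Fin 2) (Fin 2) (ZMod p)) i j := by
    intro i j
    have := congrFun (congrFun hNM i) j
    rwa [Matrix.mul_apply, Fin.sum_univ_two] at this
  have one00 : (1 : Matrix (Fin 2) (Fin 2) (ZMod p)) 0 0 = 1 := rfl
  have one01 : (1 : Matrix (Fin 2) (Fin 2) (ZMod p)) 0 1 = 0 := rfl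
  have one10 : (1 : Matrix (Fin 2) (Fin 2) (ZMod p)) 1 0 = 0 := rfl
  have one11 : (1 : Matrix (Fin 2) (Fin 2) (ZMod p)) 1 1 = 1 := rfl
  constructor
  · refine le_antisymm
      (sigma_le φ (M.val 0 0) (M.val 0 1) (M.val 1 0) (M.val 1 1) hMdet)
      (sigma_ge φ (M.val 0 0) (M.val 0 1) (M.val 1 0) (M.val 1 1)
        ((M⁻¹).val 0 0) ((M⁻¹).val 0 1) ((M⁻¹).val 1 0) ((M⁻¹).val 1 1) hNdet
        ?_ ?_ ?_ ?_)
    · have := eMN 0 0; rw [one00] at this; linear_combination this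
    · have := eMN 1 0; rw [one10] at this; linear_combination this
    · have := eMN 0 1; rw [one01] at this; linear_combination this
    · have := eMN 1 1; rw [one11] at this; linear_combination this
  · refine le_antisymm
      (tau_le φ (M.val 0 0) (M.val 0 1) (M.val 1 0) (M.val 1 1) hMdet)
      (tau_ge φ (M.val 0 0) (M.val 0 1) (M.val 1 0) (M.val 1 1)
        ((M⁻¹).val 0 0) ((M⁻¹).val 0 1) ((M⁻¹).val 1 0) ((M⁻¹).val 1 1) hNdet
        ?_ ?_ ?_ ?_)
    · have := eNM 0 0; rw [one00] at this; linear_combination this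
    · have := eNM 0 1; rw [one01] at this; linear_combination this
    · have := eNM 1 0; rw [one10] at this; linear_combination this
    · have := eNM 1 1; rw [one11] at this; linear_combination this
end

section
/- Let p be a prime with p > 2 and let K be an algebraically closed field of characteristic p. Let J ⊂ K[A,B,C,D] be the ideal generated by A^p, B^p, C^p, D^p together with the elements (m·A + n·B)^{p−1}·(m·C + n·D)^{p−1} and (m·A + n·C)^{p−1}·(m·B + n·D)^{p−1} for all (m,n) ∈ 𝔽_p² with (m,n) ≠ (0,0). Then there exists a matrix M ∈ GL₂(K) such that the K-algebra endomorphism σ_M of K[A,B,C,D] given by A ↦ M₁₁A + M₂₁B, B ↦ M₁₂A + M₂₂B, C ↦ M₁₁C + M₂₁D, D ↦ M₁₂C + M₂₂D does not preserve J, i.e. the image ideal of J under σ_M is different from J. (Consequently the full level structure on α_p × α_p over K is not invariant under all group scheme automorphisms of α_p × α_p, and there is no notion of full level structure over the stack OT × OT of products of two Oort–Tate group schemes.) -/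
/-!
Write `A, B, C, D` for `X 0, X 1, X 2, X 3` and `n = p - 1`. Take `M = !![1, t; 0, 1]` with
`t ∉ 𝔽_p`; then `σ_M` sends the generator `B^n D^n` of `J` to `(tA + B)^n (tC + D)^n`.
The functional `f ↦ [A^n C D^(n-1)] f - [A B^(n-1) D^n] f` vanishes on `J`: it kills the
multiples of `X i ^ p` since all exponents of both monomials are `< p`; both monomials have
degree `2n`, so on a multiple `q g` of a homogeneous generator `g` it only sees `q(0) g`; both
coefficients of a column generator are zero, and on the row generator for `(a, b)` it equals
`n a b^(n-1) (a^n - b^n)`, which vanishes for `a, b ∈ 𝔽_p` (for `b = 0` because `n ≥ 2`).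
On `(tA + B)^n (tC + D)^n` it equals `n t (t^n - 1) = t - t^p ≠ 0`.
-/

open Polynomial in
theorem Infinite.exists_pow_ne_self (K : Type*) [Field K] [Infinite K] {p : ℕ} (hp : 1 < p) :
    ∃ t : K, t ^ p ≠ t := by
  classical
  obtain ⟨t, ht⟩ := Infinite.exists_notMem_finset (X ^ p - X : K[X]).roots.toFinset
  refine ⟨t, fun h => ht ?_⟩
  simp [mem_roots (FiniteField.X_pow_card_sub_X_ne_zero K hp), h]

theorem Ideal.apply_eq_zero_of_mem_span {A M F : Type*} [CommSemiring A] [AddCommMonoid M]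
    [FunLike F A M] [AddMonoidHomClass F A M] (L : F) {S : Set A}
    (hS : ∀ s ∈ S, ∀ q, L (q * s) = 0) {f : A} (hf : f ∈ Ideal.span S) : L f = 0 := by
  have key : ∀ q, L (q * f) = 0 := by
    induction hf using Submodule.span_induction with
    | mem s hs => exact hS s hs
    | zero => simp
    | add x y _ _ hx hy => intro q; rw [mul_add, map_add, hx, hy, add_zero]
    | smul a x _ hx => intro q; rw [smul_eq_mul, ← mul_assoc]; exact hx _
  simpa using key 1

namespace MvPolynomial

variable {σ R : Type*} [CommSemiring R]

theorem IsHomogeneous.coeff_mul_of_degree_eq {z : MvPolynomial σ R} {d : ℕ}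
    (hz : z.IsHomogeneous d) (q : MvPolynomial σ R) {μ : σ →₀ ℕ} (hμ : μ.degree = d) :
    coeff μ (q * z) = coeff 0 q * coeff μ z := by
  classical
  rw [coeff_mul, Finset.sum_eq_single (0, μ)]
  · rintro ⟨u, v⟩ huv hne
    rw [Finset.HasAntidiagonal.mem_antidiagonal] at huv
    dsimp only at huv ⊢
    by_cases hv : v.degree = d
    · have hu : u = 0 := by
        have := congrArg Finsupp.degree huv
        rw [map_add] at this
        exact (Finsupp.degree_eq_zero_iff u).mp (by omega)
      subst hu
      rw [zero_add] at huv
      exact absurd (by rw [huv]) hne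
    · rw [hz.coeff_eq_zero hv, mul_zero]
  · intro h
    exact absurd (Finset.HasAntidiagonal.mem_antidiagonal.mpr (zero_add μ)) h

theorem coeff_mul_X_pow_eq_zero (q : MvPolynomial σ R) {i : σ} {k : ℕ} {μ : σ →₀ ℕ}
    (h : μ i < k) : coeff μ (q * X i ^ k) = 0 := by
  classical
  rw [X_pow_eq_monomial, coeff_mul_monomial', if_neg]
  intro hle
  have := hle i
  simp only [Finsupp.single_eq_same] at this
  omega

theorem linear_pow_eq_sum (a b : R) (i j : σ) (m : ℕ) :
    (C a * X i + C b * X j) ^ m =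
      ∑ k ∈ Finset.range (m + 1),
        monomial (Finsupp.single i k + Finsupp.single j (m - k))
          (a ^ k * b ^ (m - k) * m.choose k) := by
  rw [add_pow]
  refine Finset.sum_congr rfl fun k _ => ?_
  rw [mul_pow, mul_pow, ← C_pow, ← C_pow, X_pow_eq_monomial, X_pow_eq_monomial,
    C_mul_monomial, C_mul_monomial, monomial_mul, ← map_natCast C, mul_comm, C_mul_monomial]
  ring_nf

theorem coeff_linear_pow_mul_linear_pow (a b a' b' : R) (i j i' j' : σ) (m : ℕ)
    [DecidableEq σ] (μ : σ →₀ ℕ) :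
    coeff μ ((C a * X i + C b * X j) ^ m * (C a' * X i' + C b' * X j') ^ m) =
      ∑ k ∈ Finset.range (m + 1), ∑ l ∈ Finset.range (m + 1),
        if Finsupp.single i k + Finsupp.single j (m - k) +
            (Finsupp.single i' l + Finsupp.single j' (m - l)) = μ
        then a ^ k * b ^ (m - k) * m.choose k * (a' ^ l * b' ^ (m - l) * m.choose l)
        else 0 := by
  simp only [linear_pow_eq_sum, Finset.sum_mul_sum, coeff_sum, monomial_mul, coeff_monomial]

theorem isHomogeneous_linear_pow_mul_linear_pow (a b a' b' : R) (i j i' j' : σ) (m : ℕ) :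
    ((C a * X i + C b * X j) ^ m * (C a' * X i' + C b' * X j') ^ m).IsHomogeneous (m + m) := by
  have linear (a b : R) (i j : σ) : (C a * X i + C b * X j).IsHomogeneous 1 :=
    ((isHomogeneous_X R i).C_mul a).add ((isHomogeneous_X R j).C_mul b)
  simpa using ((linear a b i j).pow m).mul ((linear a' b' i' j').pow m)

end MvPolynomial

open MvPolynomial

namespace FullLevelStructure

variable {K : Type*} [Field K]

noncomputable def rowForm (a b : K) (n : ℕ) : MvPolynomial (Fin 4) K :=
  (C a * X 0 + C b * X 1) ^ n * (C a * X 2 + C b * X 3) ^ n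

noncomputable def columnForm (a b : K) (n : ℕ) : MvPolynomial (Fin 4) K :=
  (C a * X 0 + C b * X 2) ^ n * (C a * X 1 + C b * X 3) ^ n

theorem isHomogeneous_rowForm (a b : K) (n : ℕ) : (rowForm a b n).IsHomogeneous (n + n) :=
  isHomogeneous_linear_pow_mul_linear_pow ..

theorem isHomogeneous_columnForm (a b : K) (n : ℕ) : (columnForm a b n).IsHomogeneous (n + n) :=
  isHomogeneous_linear_pow_mul_linear_pow ..

theorem coeff_rowForm (a b : K) {n : ℕ} {μ : Fin 4 →₀ ℕ} (h01 : μ 0 + μ 1 = n)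
    (h23 : μ 2 + μ 3 = n) :
    coeff μ (rowForm a b n) =
      a ^ μ 0 * b ^ μ 1 * n.choose (μ 0) * (a ^ μ 2 * b ^ μ 3 * n.choose (μ 2)) := by
  rw [rowForm, coeff_linear_pow_mul_linear_pow]
  have hμ : ∀ k ∈ Finset.range (n + 1), ∀ l ∈ Finset.range (n + 1),
      (Finsupp.single 0 k + Finsupp.single 1 (n - k) +
        (Finsupp.single 2 l + Finsupp.single 3 (n - l)) = μ) ↔ (k = μ 0 ∧ l = μ 2) := by
    intro k hk l hl
    simp only [Finset.mem_range] at hk hl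
    simp [Finsupp.ext_iff, Fin.forall_fin_succ, Finsupp.single_apply]
    omega
  have h0 : μ 0 ∈ Finset.range (n + 1) := Finset.mem_range.mpr (by omega)
  have h2 : μ 2 ∈ Finset.range (n + 1) := Finset.mem_range.mpr (by omega)
  rw [Finset.sum_eq_single_of_mem (μ 0) h0, Finset.sum_eq_single_of_mem (μ 2) h2,
    if_pos ((hμ _ h0 _ h2).mpr ⟨rfl, rfl⟩), show n - μ 0 = μ 1 by omega,
    show n - μ 2 = μ 3 by omega]
  · exact fun l hl hne => if_neg fun he => hne ((hμ _ h0 _ hl).mp he).2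
  · exact fun k hk hne =>
      Finset.sum_eq_zero fun l hl => if_neg fun he => hne ((hμ _ hk _ hl).mp he).1

theorem coeff_columnForm_eq_zero (a b : K) {n : ℕ} {μ : Fin 4 →₀ ℕ}
    (h : μ 0 + μ 2 ≠ n) :
    coeff μ (columnForm a b n) = 0 := by
  rw [columnForm, coeff_linear_pow_mul_linear_pow]
  refine Finset.sum_eq_zero fun k hk => Finset.sum_eq_zero fun l _ => if_neg fun he => h ?_
  simp only [Finset.mem_range] at hk
  simp [Finsupp.ext_iff, Fin.forall_fin_succ, Finsupp.single_apply] at he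
  omega

noncomputable def levelFunctional (n : ℕ) : MvPolynomial (Fin 4) K →ₗ[K] K :=
  lcoeff K (Finsupp.equivFunOnFinite.symm ![n, 0, 1, n - 1]) -
    lcoeff K (Finsupp.equivFunOnFinite.symm ![1, n - 1, 0, n])

theorem levelFunctional_mul_X_pow {n : ℕ} (hn : 1 ≤ n) (q : MvPolynomial (Fin 4) K)
    (i : Fin 4) : levelFunctional n (q * X i ^ (n + 1)) = 0 := by
  rw [levelFunctional, LinearMap.sub_apply, lcoeff_apply, lcoeff_apply,
    coeff_mul_X_pow_eq_zero, coeff_mul_X_pow_eq_zero, sub_zero] <;>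
    fin_cases i <;> simp <;> omega

theorem levelFunctional_mul_of_isHomogeneous {n : ℕ} (hn : 1 ≤ n) {z : MvPolynomial (Fin 4) K}
    (hz : z.IsHomogeneous (n + n)) (q : MvPolynomial (Fin 4) K) :
    levelFunctional n (q * z) = coeff 0 q * levelFunctional n z := by
  simp only [levelFunctional, LinearMap.sub_apply, lcoeff_apply]
  rw [hz.coeff_mul_of_degree_eq, hz.coeff_mul_of_degree_eq, mul_sub] <;>
    simp [Finsupp.degree_eq_sum, Fin.sum_univ_four] <;> omega

theorem levelFunctional_rowForm {n : ℕ} (hn : 1 ≤ n) (a b : K) :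
    levelFunctional n (rowForm a b n) = n * a * b ^ (n - 1) * (a ^ n - b ^ n) := by
  simp only [levelFunctional, LinearMap.sub_apply, lcoeff_apply]
  rw [coeff_rowForm, coeff_rowForm] <;> simp
  · ring
  all_goals omega

theorem levelFunctional_rowForm_eq_zero {n : ℕ} (hn : 2 ≤ n) {a b : K} (ha : a ^ (n + 1) = a)
    (hb : b ^ (n + 1) = b) : levelFunctional n (rowForm a b n) = 0 := by
  rw [levelFunctional_rowForm (by omega)]
  rcases eq_or_ne b 0 with rfl | hb0
  · simp [zero_pow (by omega : n - 1 ≠ 0)]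
  · have hbn : b ^ n = 1 := mul_right_cancel₀ hb0 (by rw [← pow_succ, hb, one_mul])
    rw [hbn]
    linear_combination (n * b ^ (n - 1) : K) * ha

theorem levelFunctional_columnForm {n : ℕ} (hn : 2 ≤ n) (a b : K) :
    levelFunctional n (columnForm a b n) = 0 := by
  simp only [levelFunctional, LinearMap.sub_apply, lcoeff_apply]
  rw [coeff_columnForm_eq_zero, coeff_columnForm_eq_zero, sub_zero] <;> simp
  omega

theorem levelFunctional_eq_zero_of_mem_span {n : ℕ} (hn : 2 ≤ n)
    {S : Set (MvPolynomial (Fin 4) K)}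
    (hS : ∀ z ∈ S, (∃ i, z = X i ^ (n + 1)) ∨ ∃ a b : K, a ^ (n + 1) = a ∧
      b ^ (n + 1) = b ∧ (z = rowForm a b n ∨ z = columnForm a b n))
    {f : MvPolynomial (Fin 4) K} (hf : f ∈ Ideal.span S) : levelFunctional n f = 0 := by
  refine Ideal.apply_eq_zero_of_mem_span (levelFunctional n) (fun z hz q => ?_) hf
  rcases hS z hz with ⟨i, rfl⟩ | ⟨a, b, ha, hb, rfl | rfl⟩
  · exact levelFunctional_mul_X_pow (by omega) q i
  · rw [levelFunctional_mul_of_isHomogeneous (by omega) (isHomogeneous_rowForm a b n),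
      levelFunctional_rowForm_eq_zero hn ha hb, mul_zero]
  · rw [levelFunctional_mul_of_isHomogeneous (by omega) (isHomogeneous_columnForm a b n),
      levelFunctional_columnForm hn, mul_zero]

end FullLevelStructure

open FullLevelStructure

theorem stmt17_general (p : ℕ) [Fact p.Prime] (hp2 : 2 < p)
    (K : Type) [Field K] [IsAlgClosed K] [CharP K p]
    (φ : ZMod p →+* K)
    (J : Ideal (MvPolynomial (Fin 4) K))
    (hJ : J = Ideal.span {z : MvPolynomial (Fin 4) K |
      (∃ i : Fin 4, z = X i ^ p) ∨
      (∃ m n : ZMod p, (m ≠ 0 ∨ n ≠ 0) ∧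
        (z = (C (φ m) * X 0 + C (φ n) * X 1) ^ (p - 1) *
             (C (φ m) * X 2 + C (φ n) * X 3) ^ (p - 1) ∨
         z = (C (φ m) * X 0 + C (φ n) * X 2) ^ (p - 1) *
             (C (φ m) * X 1 + C (φ n) * X 3) ^ (p - 1)))}) :
    ∃ M : GL (Fin 2) K,
      Ideal.map (MvPolynomial.aeval
        ![C (M.val 0 0) * X 0 + C (M.val 1 0) * X 1,
          C (M.val 0 1) * X 0 + C (M.val 1 1) * X 1,
          C (M.val 0 0) * X 2 + C (M.val 1 0) * X 3,
          C (M.val 0 1) * X 2 + C (M.val 1 1) * X 3] :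
            MvPolynomial (Fin 4) K →ₐ[K] MvPolynomial (Fin 4) K).toRingHom J ≠ J := by
  have hp : p - 1 + 1 = p := Nat.sub_add_cancel (by omega)
  have hFp (m : ZMod p) : φ m ^ (p - 1 + 1) = φ m := by rw [hp, ← map_pow, ZMod.pow_card]
  have hL : ∀ f ∈ J, levelFunctional (p - 1) f = 0 := by
    rw [hJ]
    refine fun f hf => levelFunctional_eq_zero_of_mem_span (by omega) ?_ hf
    rintro z (⟨i, rfl⟩ | ⟨m, n, -, hz⟩)
    · exact Or.inl ⟨i, by rw [hp]⟩
    · exact Or.inr ⟨φ m, φ n, hFp m, hFp n, hz⟩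
  obtain ⟨t, ht⟩ := Infinite.exists_pow_ne_self K (Fact.out : p.Prime).one_lt
  refine ⟨Matrix.GeneralLinearGroup.mkOfDetNeZero !![1, t; 0, 1] (by simp), fun hJσ => ht ?_⟩
  have hBD : X 1 ^ (p - 1) * X 3 ^ (p - 1) ∈ J :=
    hJ ▸ Ideal.subset_span (Or.inr ⟨0, 1, Or.inr one_ne_zero, Or.inl (by simp)⟩)
  have hσBD : rowForm t 1 (p - 1) ∈ J := by
    rw [← hJσ]
    convert Ideal.mem_map_of_mem _ hBD
    simp [rowForm, Matrix.GeneralLinearGroup.mkOfDetNeZero]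
  have hn : ((p - 1 : ℕ) : K) = -1 := by
    rw [Nat.cast_sub (by omega), CharP.cast_eq_zero, Nat.cast_one, zero_sub]
  have hσBD_ne := hL _ hσBD
  rw [levelFunctional_rowForm (by omega), hn, one_pow, one_pow, mul_one] at hσBD_ne
  rw [← hp]
  linear_combination -hσBD_ne

/-- For `p > 2` and `K` algebraically closed of characteristic `p`, the defining
ideal `J` of the full level structure on `α_p × α_p` is *not* invariant under
all of `GL₂(K)` acting by right multiplication on the variable matrix
`(A, B; C, D)`: there is `M ∈ GL₂(K)` whose substitution `σ_M` does not
preserve `J`.  Consequently there is no full level structure over the stack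
`OT × OT`. -/
theorem stmt17 (p : ℕ) [Fact p.Prime] (hp2 : 2 < p)
    (K : Type) [Field K] [IsAlgClosed K] [CharP K p]
    (φ : ZMod p →+* K) (hφ : φ = ZMod.castHom (dvd_refl p) K)
    (J : Ideal (MvPolynomial (Fin 4) K))
    (hJ : J = Ideal.span {z : MvPolynomial (Fin 4) K |
      (∃ i : Fin 4, z = X i ^ p) ∨
      (∃ m n : ZMod p, (m ≠ 0 ∨ n ≠ 0) ∧
        (z = (C (φ m) * X 0 + C (φ n) * X 1) ^ (p - 1) *
             (C (φ m) * X 2 + C (φ n) * X 3) ^ (p - 1) ∨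
         z = (C (φ m) * X 0 + C (φ n) * X 2) ^ (p - 1) *
             (C (φ m) * X 1 + C (φ n) * X 3) ^ (p - 1)))}) :
    ∃ M : GL (Fin 2) K,
      Ideal.map (MvPolynomial.aeval
        ![C (M.val 0 0) * X 0 + C (M.val 1 0) * X 1,
          C (M.val 0 1) * X 0 + C (M.val 1 1) * X 1,
          C (M.val 0 0) * X 2 + C (M.val 1 0) * X 3,
          C (M.val 0 1) * X 2 + C (M.val 1 1) * X 3] :
            MvPolynomial (Fin 4) K →ₐ[K] MvPolynomial (Fin 4) K).toRingHom J ≠ J :=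
  stmt17_general p hp2 K φ J hJ
end
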